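/- arXiv:2501.10994 — 3 statements merged into one kernel-verified Lean document; each statement's English description precedes it below -/
import Mathlib

section
/- Let μ, μ_1, μ_2, … ∈ S_00 be such that lim_{n→∞} ∥G_1μ_n − G_1μ∥_∞ = 0. Then for every α > 0: lim_{n→∞} ∥G_αμ_n − G_αμ∥_∞ = 0 and sup_{n ≥ 1} ∥G_αμ_n∥_∞ < ∞. -/
open MeasureTheory ENNReal Set Filter Topology

/-- The `α`-potential density `R_α(x,y) = ∫_0^∞ e^{-αt} p_t(x,y) dt`. -/
noncomputable def potDensity {S : Type*} (p : ℝ → S → S → ℝ≥0∞) (α : ℝ) (x y : S) : ℝ≥0∞ :=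
  ∫⁻ t in Set.Ioi (0 : ℝ), ENNReal.ofReal (Real.exp (-α * t)) * p t x y

/-- The `α`-potential `G_αμ(x) = ∫_S R_α(x,y) μ(dy)` of a Borel measure `μ`. -/
noncomputable def potential {S : Type*} [MeasurableSpace S]
    (p : ℝ → S → S → ℝ≥0∞) (α : ℝ) (μ : Measure S) (x : S) : ℝ≥0∞ :=
  ∫⁻ y, potDensity p α x y ∂μ

set_option linter.unusedSectionVars false
set_option linter.unusedVariables false

lemma lintegral_exp_Ioi {a : ℝ} (ha : 0 < a) :
    (∫⁻ t in Set.Ioi (0:ℝ), ENNReal.ofReal (Real.exp (-a * t))) = ENNReal.ofReal (1 / a) := by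
  rw [← ofReal_integral_eq_lintegral_ofReal ((exp_neg_integrableOn_Ioi 0 ha).congr_fun
      (fun t _ => rfl) measurableSet_Ioi)
      (ae_of_all _ fun t => (Real.exp_pos _).le)]
  congr 1
  have h : ∀ x : ℝ, Real.exp (-a * x) = Real.exp (-(a * x)) := fun x => by ring_nf
  simp_rw [h]
  rw [integral_comp_mul_left_Ioi (fun x => Real.exp (-x)) 0 ha, mul_zero,
    integral_exp_neg_Ioi_zero, smul_eq_mul, mul_one, one_div]

/-- the convolution identity for the exponential weight. -/
lemma exp_conv {a b : ℝ} (ha : 0 < a) (hab : a < b) {u : ℝ} (hu : 0 < u) :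
    (∫⁻ t in Set.Ioo (0:ℝ) u,
        ENNReal.ofReal (Real.exp (-a * t)) * ENNReal.ofReal (Real.exp (-b * (u - t))))
      = ENNReal.ofReal ((Real.exp (-a * u) - Real.exp (-b * u)) / (b - a)) := by
  have hcont : Continuous fun t : ℝ => Real.exp (-a * t) * Real.exp (-b * (u - t)) := by
    fun_prop
  have hint : IntegrableOn (fun t : ℝ => Real.exp (-a * t) * Real.exp (-b * (u - t)))
      (Set.Ioo 0 u) := (hcont.integrableOn_Icc.mono_set Set.Ioo_subset_Icc_self)
  have h1 : (∫⁻ t in Set.Ioo (0:ℝ) u,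
        ENNReal.ofReal (Real.exp (-a * t)) * ENNReal.ofReal (Real.exp (-b * (u - t))))
      = ∫⁻ t in Set.Ioo (0:ℝ) u,
        ENNReal.ofReal (Real.exp (-a * t) * Real.exp (-b * (u - t))) := by
    refine lintegral_congr fun t => ?_
    rw [ENNReal.ofReal_mul (Real.exp_pos _).le]
  rw [h1, ← ofReal_integral_eq_lintegral_ofReal hint
    (ae_of_all _ fun t => mul_nonneg (Real.exp_pos _).le (Real.exp_pos _).le)]
  congr 1
  have hba : b - a ≠ 0 := by linarith
  have h2 : ∀ t : ℝ, Real.exp (-a * t) * Real.exp (-b * (u - t))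
      = Real.exp (-b * u) * Real.exp ((b - a) * t) := by
    intro t
    rw [← Real.exp_add, ← Real.exp_add]
    ring_nf
  simp_rw [h2]
  rw [← integral_Ioc_eq_integral_Ioo, ← intervalIntegral.integral_of_le hu.le,
    intervalIntegral.integral_const_mul, intervalIntegral.integral_comp_mul_left
      (fun x => Real.exp x) hba, mul_zero, integral_exp, smul_eq_mul, Real.exp_zero]
  have h3 : Real.exp (-b * u) * Real.exp ((b - a) * u) = Real.exp (-a * u) := by
    rw [← Real.exp_add]; ring_nf
  set X := Real.exp (-a * u)
  set Y := Real.exp (-b * u)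
  set Z := Real.exp ((b - a) * u)
  field_simp
  linear_combination h3

section Aux

variable {S : Type*} [MeasurableSpace S] {p : ℝ → S → S → ℝ≥0∞}

lemma measurable_E (a : ℝ) : Measurable fun t : ℝ => ENNReal.ofReal (Real.exp (-a * t)) :=
  ENNReal.measurable_ofReal.comp (Real.measurable_exp.comp (measurable_const.mul measurable_id))

lemma measurable_p_right (hp : Measurable fun q : ℝ × S × S => p q.1 q.2.1 q.2.2)
    (t : ℝ) (x : S) : Measurable fun z : S => p t x z :=
  hp.comp (measurable_const.prodMk (measurable_const.prodMk measurable_id))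

lemma measurable_p_left (hp : Measurable fun q : ℝ × S × S => p q.1 q.2.1 q.2.2)
    (t : ℝ) (y : S) : Measurable fun z : S => p t z y :=
  hp.comp (measurable_const.prodMk (measurable_id.prodMk measurable_const))

lemma measurable_p_time (hp : Measurable fun q : ℝ × S × S => p q.1 q.2.1 q.2.2)
    (x y : S) : Measurable fun u : ℝ => p u x y :=
  hp.comp (measurable_id.prodMk (measurable_const.prodMk measurable_const))

lemma measurable_potDensity (hp : Measurable fun q : ℝ × S × S => p q.1 q.2.1 q.2.2) (a : ℝ) :
    Measurable fun q : S × S => potDensity p a q.1 q.2 := by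
  unfold potDensity
  exact Measurable.lintegral_prod_right'
    (f := fun z : (S × S) × ℝ => ENNReal.ofReal (Real.exp (-a * z.2)) * p z.2 z.1.1 z.1.2)
    (((ENNReal.measurable_ofReal.comp (Real.measurable_exp.comp
        ((measurable_const.mul measurable_snd)))).mul
      (hp.comp (measurable_snd.prodMk ((measurable_fst.comp measurable_fst).prodMk
        (measurable_snd.comp measurable_fst))))))

lemma measurable_potDensity_right (hp : Measurable fun q : ℝ × S × S => p q.1 q.2.1 q.2.2)
    (a : ℝ) (x : S) : Measurable fun z : S => potDensity p a x z :=
  (measurable_potDensity hp a).comp (measurable_const.prodMk measurable_id)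

lemma measurable_potential (hp : Measurable fun q : ℝ × S × S => p q.1 q.2.1 q.2.2)
    (a : ℝ) (ν : Measure S) [SFinite ν] : Measurable (potential p a ν) := by
  unfold potential
  exact Measurable.lintegral_prod_right'
    (f := fun z : S × S => potDensity p a z.1 z.2) (measurable_potDensity hp a)

lemma potDensity_symm (hsymm : ∀ t > (0 : ℝ), ∀ x y : S, p t x y = p t y x) (a : ℝ) (x y : S) :
    potDensity p a x y = potDensity p a y x := by
  unfold potDensity
  refine setLIntegral_congr_fun measurableSet_Ioi (fun t ht => ?_)
  rw [hsymm t ht]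

lemma potDensity_mono {a b : ℝ} (hab : a ≤ b) (x y : S) :
    potDensity p b x y ≤ potDensity p a x y := by
  unfold potDensity
  refine lintegral_mono_ae ((ae_restrict_mem measurableSet_Ioi).mono fun t ht => ?_)
  exact mul_le_mul_left (ENNReal.ofReal_le_ofReal (Real.exp_le_exp.2
    (by nlinarith [(show (0:ℝ) < t from ht).le]))) _

lemma potential_mono {a b : ℝ} (hab : a ≤ b) (ν : Measure S) (x : S) :
    potential p b ν x ≤ potential p a ν x :=
  lintegral_mono fun y => potDensity_mono hab x y

lemma potDensity_mass (m : Measure S) [SigmaFinite m]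
    (hp : Measurable fun q : ℝ × S × S => p q.1 q.2.1 q.2.2)
    (hsub : ∀ t > (0 : ℝ), ∀ x : S, (∫⁻ y, p t x y ∂m) ≤ 1)
    {a : ℝ} (ha : 0 < a) (x : S) :
    (∫⁻ z, potDensity p a x z ∂m) ≤ ENNReal.ofReal (1 / a) := by
  have hmeas : AEMeasurable
      (Function.uncurry fun z t => ENNReal.ofReal (Real.exp (-a * t)) * p t x z)
      (m.prod (volume.restrict (Set.Ioi (0:ℝ)))) := by
    refine Measurable.aemeasurable ?_
    exact ((measurable_E a).comp measurable_snd).mul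
      (hp.comp (measurable_snd.prodMk (measurable_const.prodMk measurable_fst)))
  calc (∫⁻ z, potDensity p a x z ∂m)
      = ∫⁻ t in Set.Ioi (0:ℝ), ∫⁻ z, ENNReal.ofReal (Real.exp (-a * t)) * p t x z ∂m := by
        exact lintegral_lintegral_swap hmeas
    _ = ∫⁻ t in Set.Ioi (0:ℝ), ENNReal.ofReal (Real.exp (-a * t)) * ∫⁻ z, p t x z ∂m := by
        refine lintegral_congr fun t => lintegral_const_mul _ (measurable_p_right hp t x)
    _ ≤ ∫⁻ t in Set.Ioi (0:ℝ), ENNReal.ofReal (Real.exp (-a * t)) := by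
        refine lintegral_mono_ae ((ae_restrict_mem measurableSet_Ioi).mono fun t ht => ?_)
        simpa using mul_le_mul_right (hsub t ht x) _
    _ = ENNReal.ofReal (1 / a) := lintegral_exp_Ioi ha

lemma time_comp_eq (hp : Measurable fun q : ℝ × S × S => p q.1 q.2.1 q.2.2)
    {a b : ℝ} (ha : 0 < a) (hab : a < b) (x y : S) :
    (∫⁻ t in Set.Ioi (0:ℝ), ∫⁻ s in Set.Ioi (0:ℝ),
        ENNReal.ofReal (Real.exp (-a * t)) * ENNReal.ofReal (Real.exp (-b * s))
          * p (t + s) x y)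
      = ∫⁻ u in Set.Ioi (0:ℝ),
          ENNReal.ofReal ((Real.exp (-a * u) - Real.exp (-b * u)) / (b - a)) * p u x y := by
  set E : ℝ → ℝ → ℝ≥0∞ := fun c t => ENNReal.ofReal (Real.exp (-c * t)) with hE
  set P : ℝ → ℝ≥0∞ := fun u => p u x y with hPdef
  have hP : Measurable P := measurable_p_time hp x y
  have hEm : ∀ c : ℝ, Measurable (E c) := fun c => measurable_E c
  set K : ℝ × ℝ → ℝ≥0∞ :=
    Set.indicator {q : ℝ × ℝ | 0 < q.1 ∧ q.1 < q.2}
      (fun q => E a q.1 * E b (q.2 - q.1) * P q.2) with hKdef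
  have hsetm : MeasurableSet {q : ℝ × ℝ | 0 < q.1 ∧ q.1 < q.2} :=
    (measurableSet_lt measurable_const measurable_fst).inter
      (measurableSet_lt measurable_fst measurable_snd)
  have hK : Measurable K := by
    refine Measurable.indicator ?_ hsetm
    exact (((hEm a).comp measurable_fst).mul
      ((hEm b).comp (measurable_snd.sub measurable_fst))).mul (hP.comp measurable_snd)
  have step1 : ∀ t : ℝ, (∫⁻ s in Set.Ioi (0:ℝ), E b s * P (t + s))
      = ∫⁻ u, (Set.Ioi t).indicator (fun u => E b (u - t) * P u) u := by
    intro t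
    rw [← lintegral_indicator measurableSet_Ioi,
      ← lintegral_add_right_eq_self
        (fun u => (Set.Ioi t).indicator (fun u => E b (u - t) * P u) u) t]
    refine lintegral_congr fun s => ?_
    by_cases hs : 0 < s
    · rw [Set.indicator_of_mem (Set.mem_Ioi.2 hs),
        Set.indicator_of_mem (Set.mem_Ioi.2 (by linarith : t < s + t))]
      rw [add_sub_cancel_right, add_comm t s]
    · rw [Set.indicator_of_notMem (by simpa using hs),
        Set.indicator_of_notMem (by simp; linarith [not_lt.1 hs])]
  calc (∫⁻ t in Set.Ioi (0:ℝ), ∫⁻ s in Set.Ioi (0:ℝ), E a t * E b s * P (t + s))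
      = ∫⁻ t in Set.Ioi (0:ℝ), E a t * ∫⁻ s in Set.Ioi (0:ℝ), E b s * P (t + s) := by
        refine lintegral_congr fun t => ?_
        have hm1 : Measurable fun s : ℝ => E b s * P (t + s) :=
          (hEm b).mul (hP.comp (measurable_const.add measurable_id))
        rw [← lintegral_const_mul _ hm1]
        exact lintegral_congr fun s => (mul_assoc _ _ _)
    _ = ∫⁻ t, ∫⁻ u, K (t, u) := by
        rw [← lintegral_indicator measurableSet_Ioi]
        refine lintegral_congr fun t => ?_
        by_cases ht : 0 < t
        · have hm2 : Measurable fun u : ℝ => (Set.Ioi t).indicator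
              (fun u => E b (u - t) * P u) u :=
            Measurable.indicator (((hEm b).comp (measurable_id.sub measurable_const)).mul hP)
              measurableSet_Ioi
          rw [Set.indicator_of_mem (Set.mem_Ioi.2 ht), step1 t,
            ← lintegral_const_mul _ hm2]
          refine lintegral_congr fun u => ?_
          by_cases hu : t < u
          · rw [Set.indicator_of_mem (Set.mem_Ioi.2 hu), hKdef,
              Set.indicator_of_mem
                (show (t, u) ∈ {q : ℝ × ℝ | 0 < q.1 ∧ q.1 < q.2} from ⟨ht, hu⟩), mul_assoc]
          · rw [Set.indicator_of_notMem (by simpa using hu), hKdef,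
              Set.indicator_of_notMem
                (show (t, u) ∉ {q : ℝ × ℝ | 0 < q.1 ∧ q.1 < q.2} from fun h => hu h.2),
                mul_zero]
        · rw [Set.indicator_of_notMem (by simpa using ht)]
          have hz : ∀ u : ℝ, K (t, u) = 0 := fun u =>
            Set.indicator_of_notMem (fun h => ht h.1) _
          simp_rw [hz, lintegral_zero]
    _ = ∫⁻ u, ∫⁻ t, K (t, u) := lintegral_lintegral_swap hK.aemeasurable
    _ = ∫⁻ u, (Set.Ioi (0:ℝ)).indicator
          (fun u => ENNReal.ofReal ((Real.exp (-a * u) - Real.exp (-b * u)) / (b - a)) * P u)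
          u := by
        refine lintegral_congr fun u => ?_
        have hKt : ∀ t, K (t, u)
            = (Set.Ioo (0:ℝ) u).indicator (fun t => E a t * E b (u - t)) t * P u := by
          intro t
          by_cases h : 0 < t ∧ t < u
          · rw [hKdef, Set.indicator_of_mem
              (show (t, u) ∈ {q : ℝ × ℝ | 0 < q.1 ∧ q.1 < q.2} from h),
              Set.indicator_of_mem (Set.mem_Ioo.2 h)]
          · rw [hKdef, Set.indicator_of_notMem
              (show (t, u) ∉ {q : ℝ × ℝ | 0 < q.1 ∧ q.1 < q.2} from h),
              Set.indicator_of_notMem (fun hh => h (Set.mem_Ioo.1 hh)), zero_mul]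
        simp_rw [hKt]
        have hm3 : Measurable fun t : ℝ => (Set.Ioo (0:ℝ) u).indicator
            (fun t => E a t * E b (u - t)) t :=
          Measurable.indicator ((hEm a).mul
            ((hEm b).comp (measurable_const.sub measurable_id))) measurableSet_Ioo
        rw [lintegral_mul_const _ hm3, lintegral_indicator measurableSet_Ioo]
        by_cases hu : 0 < u
        · rw [Set.indicator_of_mem (Set.mem_Ioi.2 hu), exp_conv ha hab hu]
        · rw [Set.indicator_of_notMem (by simpa using hu), Set.Ioo_eq_empty hu,
            Measure.restrict_empty]
          simp
    _ = ∫⁻ u in Set.Ioi (0:ℝ),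
          ENNReal.ofReal ((Real.exp (-a * u) - Real.exp (-b * u)) / (b - a)) * p u x y :=
        lintegral_indicator measurableSet_Ioi _

lemma kernel_comp_eq (m : Measure S) [SigmaFinite m]
    (hp : Measurable fun q : ℝ × S × S => p q.1 q.2.1 q.2.2)
    (hCK : ∀ s > (0 : ℝ), ∀ t > (0 : ℝ), ∀ x y : S,
      p (t + s) x y = ∫⁻ z, p t x z * p s z y ∂m)
    (a b : ℝ) (x y : S) :
    (∫⁻ z, potDensity p a x z * potDensity p b z y ∂m)
      = ∫⁻ t in Set.Ioi (0:ℝ), ∫⁻ s in Set.Ioi (0:ℝ),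
          ENNReal.ofReal (Real.exp (-a * t)) * ENNReal.ofReal (Real.exp (-b * s))
            * p (t + s) x y := by
  set ν : Measure ℝ := volume.restrict (Set.Ioi (0:ℝ)) with hν
  set A : ℝ → S → ℝ≥0∞ := fun t z => ENNReal.ofReal (Real.exp (-a * t)) * p t x z with hA
  set B : ℝ → S → ℝ≥0∞ := fun s z => ENNReal.ofReal (Real.exp (-b * s)) * p s z y with hB
  have hmA : ∀ z, Measurable fun t : ℝ => A t z := fun z =>
    (measurable_E a).mul (hp.comp (measurable_id.prodMk
      (measurable_const.prodMk measurable_const)))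
  have hmB : ∀ z, Measurable fun s : ℝ => B s z := fun z =>
    (measurable_E b).mul (hp.comp (measurable_id.prodMk
      (measurable_const.prodMk measurable_const)))
  have h1 : ∀ z : S, potDensity p a x z * potDensity p b z y
      = ∫⁻ t, ∫⁻ s, A t z * B s z ∂ν ∂ν := by
    intro z
    rw [show potDensity p a x z = ∫⁻ t, A t z ∂ν from rfl,
      show potDensity p b z y = ∫⁻ s, B s z ∂ν from rfl,
      ← lintegral_mul_const _ (hmA z)]
    exact lintegral_congr fun t => (lintegral_const_mul _ (hmB z)).symm
  have swap1 : (∫⁻ z, ∫⁻ t, (∫⁻ s, A t z * B s z ∂ν) ∂ν ∂m)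
      = ∫⁻ t, ∫⁻ z, (∫⁻ s, A t z * B s z ∂ν) ∂m ∂ν := by
    refine lintegral_lintegral_swap (Measurable.aemeasurable ?_)
    refine Measurable.lintegral_prod_right'
      (f := fun w : (S × ℝ) × ℝ => A w.1.2 w.1.1 * B w.2 w.1.1) ?_
    exact (((measurable_E a).comp (measurable_snd.comp measurable_fst)).mul
        (hp.comp ((measurable_snd.comp measurable_fst).prodMk
          (measurable_const.prodMk (measurable_fst.comp measurable_fst))))).mul
      (((measurable_E b).comp measurable_snd).mul
        (hp.comp (measurable_snd.prodMk
          ((measurable_fst.comp measurable_fst).prodMk measurable_const))))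
  have swap2 : ∀ t : ℝ, (∫⁻ z, (∫⁻ s, A t z * B s z ∂ν) ∂m)
      = ∫⁻ s, ∫⁻ z, A t z * B s z ∂m ∂ν := by
    intro t
    refine lintegral_lintegral_swap (Measurable.aemeasurable ?_)
    exact (((measurable_E a).comp measurable_const).mul
        (hp.comp (measurable_const.prodMk
          (measurable_const.prodMk measurable_fst)))).mul
      (((measurable_E b).comp measurable_snd).mul
        (hp.comp (measurable_snd.prodMk (measurable_fst.prodMk measurable_const))))
  have inner : ∀ t > (0:ℝ), ∀ s > (0:ℝ), (∫⁻ z, A t z * B s z ∂m)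
      = ENNReal.ofReal (Real.exp (-a * t)) * ENNReal.ofReal (Real.exp (-b * s))
          * p (t + s) x y := by
    intro t ht s hs
    have : ∀ z, A t z * B s z
        = ENNReal.ofReal (Real.exp (-a * t)) * ENNReal.ofReal (Real.exp (-b * s))
            * (p t x z * p s z y) := fun z => mul_mul_mul_comm _ _ _ _
    simp_rw [this]
    rw [lintegral_const_mul _ (f := fun z => p t x z * p s z y) ((measurable_p_right hp t x).mul (measurable_p_left hp s y)),
      ← hCK s hs t ht x y]
  calc (∫⁻ z, potDensity p a x z * potDensity p b z y ∂m)
      = ∫⁻ z, (∫⁻ t, ∫⁻ s, A t z * B s z ∂ν ∂ν) ∂m := lintegral_congr h1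
    _ = ∫⁻ t, ∫⁻ z, (∫⁻ s, A t z * B s z ∂ν) ∂m ∂ν := swap1
    _ = ∫⁻ t, ∫⁻ s, ∫⁻ z, A t z * B s z ∂m ∂ν ∂ν := lintegral_congr swap2
    _ = ∫⁻ t in Set.Ioi (0:ℝ), ∫⁻ s in Set.Ioi (0:ℝ),
          ENNReal.ofReal (Real.exp (-a * t)) * ENNReal.ofReal (Real.exp (-b * s))
            * p (t + s) x y := by
        refine lintegral_congr_ae ((ae_restrict_mem measurableSet_Ioi).mono fun t ht => ?_)
        refine lintegral_congr_ae ((ae_restrict_mem measurableSet_Ioi).mono fun s hs => ?_)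
        exact inner t ht s hs

lemma resolvent_density (m : Measure S) [SigmaFinite m]
    (hp : Measurable fun q : ℝ × S × S => p q.1 q.2.1 q.2.2)
    (hCK : ∀ s > (0 : ℝ), ∀ t > (0 : ℝ), ∀ x y : S,
      p (t + s) x y = ∫⁻ z, p t x z * p s z y ∂m)
    {a b : ℝ} (ha : 0 < a) (hab : a < b) (x y : S) :
    potDensity p a x y = potDensity p b x y
      + ENNReal.ofReal (b - a) * ∫⁻ z, potDensity p a x z * potDensity p b z y ∂m := by
  rw [kernel_comp_eq m hp hCK a b x y, time_comp_eq hp ha hab x y]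
  have hm : Measurable fun u : ℝ =>
      ENNReal.ofReal ((Real.exp (-a * u) - Real.exp (-b * u)) / (b - a)) * p u x y :=
    (ENNReal.measurable_ofReal.comp (Measurable.div_const
      ((Real.measurable_exp.comp (measurable_const.mul measurable_id)).sub
        (Real.measurable_exp.comp (measurable_const.mul measurable_id))) (b - a))).mul
      (measurable_p_time hp x y)
  unfold potDensity
  rw [← lintegral_const_mul _ hm, ← lintegral_add_left
    (f := fun t => ENNReal.ofReal (Real.exp (-b * t)) * p t x y)
    ((measurable_E b).mul (measurable_p_time hp x y))]
  refine lintegral_congr_ae ((ae_restrict_mem measurableSet_Ioi).mono fun u hu => ?_)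
  have hba : (0:ℝ) < b - a := by linarith
  have hu0 : (0:ℝ) < u := hu
  have hXY : Real.exp (-b * u) ≤ Real.exp (-a * u) := by
    apply Real.exp_le_exp.2; nlinarith
  have key : ENNReal.ofReal (Real.exp (-a * u))
      = ENNReal.ofReal (Real.exp (-b * u)) + ENNReal.ofReal (b - a)
        * ENNReal.ofReal ((Real.exp (-a * u) - Real.exp (-b * u)) / (b - a)) := by
    rw [← ENNReal.ofReal_mul hba.le, mul_div_cancel₀ _ hba.ne',
      ← ENNReal.ofReal_add (Real.exp_pos _).le (by linarith), add_sub_cancel]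
  dsimp only
  rw [key, add_mul, mul_assoc]

lemma resolvent_density' (m : Measure S) [SigmaFinite m]
    (hp : Measurable fun q : ℝ × S × S => p q.1 q.2.1 q.2.2)
    (hsymm : ∀ t > (0 : ℝ), ∀ x y : S, p t x y = p t y x)
    (hCK : ∀ s > (0 : ℝ), ∀ t > (0 : ℝ), ∀ x y : S,
      p (t + s) x y = ∫⁻ z, p t x z * p s z y ∂m)
    {a b : ℝ} (ha : 0 < a) (hab : a < b) (x y : S) :
    potDensity p a x y = potDensity p b x y
      + ENNReal.ofReal (b - a) * ∫⁻ z, potDensity p b x z * potDensity p a z y ∂m := by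
  have h := resolvent_density m hp hCK ha hab y x
  rw [potDensity_symm hsymm a y x, potDensity_symm hsymm b y x] at h
  rw [h]
  congr 2
  refine lintegral_congr fun z => ?_
  rw [potDensity_symm hsymm a y z, potDensity_symm hsymm b z x, mul_comm]

lemma resolvent_potential (m : Measure S) [SigmaFinite m]
    (hp : Measurable fun q : ℝ × S × S => p q.1 q.2.1 q.2.2)
    (hCK : ∀ s > (0 : ℝ), ∀ t > (0 : ℝ), ∀ x y : S,
      p (t + s) x y = ∫⁻ z, p t x z * p s z y ∂m)
    {a b : ℝ} (ha : 0 < a) (hab : a < b) (ν : Measure S) [SFinite ν] (x : S) :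
    potential p a ν x = potential p b ν x
      + ENNReal.ofReal (b - a) * ∫⁻ z, potDensity p a x z * potential p b ν z ∂m := by
  have hmy : Measurable fun y : S =>
      ∫⁻ z, potDensity p a x z * potDensity p b z y ∂m := by
    refine Measurable.lintegral_prod_right'
      (f := fun w : S × S => potDensity p a x w.2 * potDensity p b w.2 w.1) ?_
    exact ((measurable_potDensity hp a).comp (measurable_const.prodMk measurable_snd)).mul
      ((measurable_potDensity hp b).comp (measurable_snd.prodMk measurable_fst))
  calc potential p a ν x
      = ∫⁻ y, (potDensity p b x y + ENNReal.ofReal (b - a)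
          * ∫⁻ z, potDensity p a x z * potDensity p b z y ∂m) ∂ν :=
        lintegral_congr fun y => resolvent_density m hp hCK ha hab x y
    _ = potential p b ν x + ENNReal.ofReal (b - a)
          * ∫⁻ y, ∫⁻ z, potDensity p a x z * potDensity p b z y ∂m ∂ν := by
        rw [lintegral_add_left (measurable_potDensity_right hp b x),
          lintegral_const_mul _ hmy]
        rfl
    _ = potential p b ν x + ENNReal.ofReal (b - a)
          * ∫⁻ z, ∫⁻ y, potDensity p a x z * potDensity p b z y ∂ν ∂m := by
        congr 1
        congr 1
        refine lintegral_lintegral_swap (Measurable.aemeasurable ?_)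
        exact ((measurable_potDensity hp a).comp
            (measurable_const.prodMk measurable_snd)).mul
          ((measurable_potDensity hp b).comp (measurable_snd.prodMk measurable_fst))
    _ = potential p b ν x + ENNReal.ofReal (b - a)
          * ∫⁻ z, potDensity p a x z * potential p b ν z ∂m := by
        congr 1
        congr 1
        refine lintegral_congr fun z => ?_
        rw [lintegral_const_mul _ (measurable_potDensity_right hp b z)]
        rfl

lemma resolvent_potential' (m : Measure S) [SigmaFinite m]
    (hp : Measurable fun q : ℝ × S × S => p q.1 q.2.1 q.2.2)
    (hsymm : ∀ t > (0 : ℝ), ∀ x y : S, p t x y = p t y x)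
    (hCK : ∀ s > (0 : ℝ), ∀ t > (0 : ℝ), ∀ x y : S,
      p (t + s) x y = ∫⁻ z, p t x z * p s z y ∂m)
    {a b : ℝ} (ha : 0 < a) (hab : a < b) (ν : Measure S) [SFinite ν] (x : S) :
    potential p a ν x = potential p b ν x
      + ENNReal.ofReal (b - a) * ∫⁻ z, potDensity p b x z * potential p a ν z ∂m := by
  have hmy : Measurable fun y : S =>
      ∫⁻ z, potDensity p b x z * potDensity p a z y ∂m := by
    refine Measurable.lintegral_prod_right'
      (f := fun w : S × S => potDensity p b x w.2 * potDensity p a w.2 w.1) ?_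
    exact ((measurable_potDensity hp b).comp (measurable_const.prodMk measurable_snd)).mul
      ((measurable_potDensity hp a).comp (measurable_snd.prodMk measurable_fst))
  calc potential p a ν x
      = ∫⁻ y, (potDensity p b x y + ENNReal.ofReal (b - a)
          * ∫⁻ z, potDensity p b x z * potDensity p a z y ∂m) ∂ν :=
        lintegral_congr fun y => resolvent_density' m hp hsymm hCK ha hab x y
    _ = potential p b ν x + ENNReal.ofReal (b - a)
          * ∫⁻ y, ∫⁻ z, potDensity p b x z * potDensity p a z y ∂m ∂ν := by
        rw [lintegral_add_left (measurable_potDensity_right hp b x),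
          lintegral_const_mul _ hmy]
        rfl
    _ = potential p b ν x + ENNReal.ofReal (b - a)
          * ∫⁻ z, ∫⁻ y, potDensity p b x z * potDensity p a z y ∂ν ∂m := by
        congr 1
        congr 1
        refine lintegral_lintegral_swap (Measurable.aemeasurable ?_)
        exact ((measurable_potDensity hp b).comp
            (measurable_const.prodMk measurable_snd)).mul
          ((measurable_potDensity hp a).comp (measurable_snd.prodMk measurable_fst))
    _ = potential p b ν x + ENNReal.ofReal (b - a)
          * ∫⁻ z, potDensity p b x z * potential p a ν z ∂m := by
        congr 1
        congr 1
        refine lintegral_congr fun z => ?_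
        rw [lintegral_const_mul _ (measurable_potDensity_right hp a z)]
        rfl

end Aux

/-- Let `μ, μ_1, μ_2, … ∈ S_00` with `‖G_1μ_n − G_1μ‖_∞ → 0`. Then for every `α > 0`:
`‖G_αμ_n − G_αμ‖_∞ → 0` and `sup_n ‖G_αμ_n‖_∞ < ∞`. (Sup-norms of differences of `[0,∞]`-valued
functions are expressed via `max (a - b) (b - a)` with truncated subtraction.) -/
theorem potential_uniform_convergence
    {S : Type*} [TopologicalSpace S] [LocallyCompactSpace S]
    [TopologicalSpace.SeparableSpace S] [TopologicalSpace.MetrizableSpace S]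
    [MeasurableSpace S] [BorelSpace S]
    (m : Measure S) [SigmaFinite m] [IsFiniteMeasureOnCompacts m]
    (hfull : ∀ U : Set S, IsOpen U → U.Nonempty → 0 < m U)
    (p : ℝ → S → S → ℝ≥0∞)
    (hp_meas : Measurable fun q : ℝ × S × S => p q.1 q.2.1 q.2.2)
    (hsymm : ∀ t > (0 : ℝ), ∀ x y : S, p t x y = p t y x)
    (hCK : ∀ s > (0 : ℝ), ∀ t > (0 : ℝ), ∀ x y : S,
      p (t + s) x y = ∫⁻ z, p t x z * p s z y ∂m)
    (hsub : ∀ t > (0 : ℝ), ∀ x : S, (∫⁻ y, p t x y ∂m) ≤ 1)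
    (μ : Measure S) (μseq : ℕ → Measure S)
    [IsFiniteMeasure μ] [∀ n, IsFiniteMeasure (μseq n)]
    (hμ : (⨆ x : S, potential p 1 μ x) < ⊤)
    (hμn : ∀ n, (⨆ x : S, potential p 1 (μseq n) x) < ⊤)
    (hconv : Filter.Tendsto
      (fun n => ⨆ x : S, max (potential p 1 (μseq n) x - potential p 1 μ x)
        (potential p 1 μ x - potential p 1 (μseq n) x))
      Filter.atTop (nhds 0)) :
    ∀ α : ℝ, 0 < α →
      Filter.Tendsto
        (fun n => ⨆ x : S, max (potential p α (μseq n) x - potential p α μ x)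
          (potential p α μ x - potential p α (μseq n) x))
        Filter.atTop (nhds 0)
      ∧ (⨆ n, ⨆ x : S, potential p α (μseq n) x) < ⊤ := by
  intro α hα
  set f : S → ℝ≥0∞ := potential p 1 μ with hf
  set fn : ℕ → S → ℝ≥0∞ := fun n => potential p 1 (μseq n) with hfn
  set ε : ℕ → ℝ≥0∞ := fun n => ⨆ x : S, max (fn n x - f x) (f x - fn n x) with hε
  have hεle : ∀ n x, max (fn n x - f x) (f x - fn n x) ≤ ε n := by
    intro n x
    rw [hε]
    exact le_iSup (fun x => max (fn n x - f x) (f x - fn n x)) x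
  have hε1 : ∀ n x, fn n x ≤ f x + ε n := by
    intro n x
    have : fn n x - f x ≤ ε n := le_trans (le_max_left _ _) (hεle n x)
    rw [tsub_le_iff_right] at this
    exact this.trans (by rw [add_comm])
  have hε2 : ∀ n x, f x ≤ fn n x + ε n := by
    intro n x
    have : f x - fn n x ≤ ε n := le_trans (le_max_right _ _) (hεle n x)
    rw [tsub_le_iff_right] at this
    exact this.trans (by rw [add_comm])
  -- uniform bound on the 1-potentials
  obtain ⟨N, hN⟩ : ∃ N : ℕ, ∀ n ≥ N, ε n < 1 :=
    eventually_atTop.1 (hconv.eventually_lt_const (by norm_num : (0:ℝ≥0∞) < 1))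
  set C : ℝ≥0∞ := ((⨆ x : S, f x) + 1) ⊔ ((Finset.range N).sup fun n => ⨆ x : S, fn n x) with hC
  have hCtop : C < ⊤ := by
    rw [hC]
    refine max_lt (ENNReal.add_lt_top.2 ⟨hμ, one_lt_top⟩) ?_
    exact (Finset.sup_lt_iff (by simp)).2 fun n _ => hμn n
  have hfnC : ∀ n x, fn n x ≤ C := by
    intro n x
    rw [hC]
    by_cases hn : n < N
    · exact le_trans (le_iSup (fun x => fn n x) x)
        (le_trans (Finset.le_sup (f := fun n => ⨆ x : S, fn n x) (Finset.mem_range.2 hn)) (le_max_right _ _))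
    · refine le_trans ?_ (le_max_left _ _)
      calc fn n x ≤ f x + ε n := hε1 n x
        _ ≤ (⨆ x : S, f x) + 1 :=
            add_le_add (le_iSup _ x) (hN n (not_lt.1 hn)).le
  have hfC : ∀ x, f x ≤ C := by
    intro x
    rw [hC]
    exact le_trans (le_trans (le_iSup _ x) (self_le_add_right _ 1)) (le_max_left _ _)
  -- the kernel operator Φ
  set Φ : Measure S → S → ℝ≥0∞ :=
    fun ν x => ∫⁻ z, potDensity p α x z * potential p 1 ν z ∂m with hΦ
  set r : ℝ≥0∞ := ENNReal.ofReal (1 / α) with hr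
  have hΦle : ∀ (ν : Measure S) [SFinite ν] (x : S),
      Φ ν x ≤ r * ⨆ z : S, potential p 1 ν z := by
    intro ν _ x
    calc Φ ν x ≤ ∫⁻ z, potDensity p α x z * ⨆ w : S, potential p 1 ν w ∂m :=
          lintegral_mono fun z => mul_le_mul_right (le_iSup _ z) _
      _ = (∫⁻ z, potDensity p α x z ∂m) * ⨆ w : S, potential p 1 ν w :=
          lintegral_mul_const _ (measurable_potDensity_right hp_meas α x)
      _ ≤ r * ⨆ w : S, potential p 1 ν w :=
          mul_le_mul_left (potDensity_mass m hp_meas hsub hα x) _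
  have hkey : ∀ (ν₁ ν₂ : Measure S) [SFinite ν₁] [SFinite ν₂] (e : ℝ≥0∞),
      (∀ z, potential p 1 ν₁ z ≤ potential p 1 ν₂ z + e) →
      ∀ x, Φ ν₁ x ≤ Φ ν₂ x + r * e := by
    intro ν₁ ν₂ _ _ e he x
    calc Φ ν₁ x ≤ ∫⁻ z, potDensity p α x z * (potential p 1 ν₂ z + e) ∂m :=
          lintegral_mono fun z => mul_le_mul_right (he z) _
      _ = ∫⁻ z, (potDensity p α x z * potential p 1 ν₂ z + potDensity p α x z * e) ∂m := by
          simp_rw [mul_add]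
      _ = Φ ν₂ x + ∫⁻ z, potDensity p α x z * e ∂m := by
          rw [lintegral_add_left (f := fun z => potDensity p α x z * potential p 1 ν₂ z)
            ((measurable_potDensity_right hp_meas α x).mul
            (measurable_potential hp_meas 1 ν₂))]
      _ = Φ ν₂ x + (∫⁻ z, potDensity p α x z ∂m) * e := by
          rw [lintegral_mul_const _ (measurable_potDensity_right hp_meas α x)]
      _ ≤ Φ ν₂ x + r * e :=
          add_le_add_right (mul_le_mul_left (potDensity_mass m hp_meas hsub hα x) _) _
  have hΦn_diff : ∀ n x, Φ (μseq n) x - Φ μ x ≤ r * ε n := by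
    intro n x
    rw [tsub_le_iff_right, add_comm]
    exact hkey (μseq n) μ (ε n) (hε1 n) x
  have hΦ_diff : ∀ n x, Φ μ x - Φ (μseq n) x ≤ r * ε n := by
    intro n x
    rw [tsub_le_iff_right, add_comm]
    exact hkey μ (μseq n) (ε n) (hε2 n) x
  rcases lt_trichotomy α 1 with hα1 | hα1 | hα1
  · -- case α < 1
    set c : ℝ≥0∞ := ENNReal.ofReal (1 - α) with hc
    have hid : ∀ (ν : Measure S) [SFinite ν] (x : S),
        potential p α ν x = potential p 1 ν x + c * Φ ν x := fun ν _ x =>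
      resolvent_potential m hp_meas hCK hα hα1 ν x
    have hfin : (1 + c * r) ≠ ⊤ := by
      refine ENNReal.add_ne_top.2 ⟨one_ne_top, ENNReal.mul_ne_top ofReal_ne_top ofReal_ne_top⟩
    have hbound : ∀ n x,
        max (potential p α (μseq n) x - potential p α μ x)
          (potential p α μ x - potential p α (μseq n) x) ≤ (1 + c * r) * ε n := by
      intro n x
      have h1 : potential p α (μseq n) x - potential p α μ x ≤ (1 + c * r) * ε n := by
        rw [hid (μseq n) x, hid μ x]
        calc fn n x + c * Φ (μseq n) x - (f x + c * Φ μ x)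
            ≤ (fn n x - f x) + (c * Φ (μseq n) x - c * Φ μ x) :=
              add_tsub_add_le_tsub_add_tsub
          _ ≤ ε n + c * (Φ (μseq n) x - Φ μ x) := by
              refine add_le_add (le_trans (le_max_left _ _) (hεle n x)) ?_
              rw [tsub_le_iff_right, ← mul_add]
              exact mul_le_mul_right le_tsub_add _
          _ ≤ ε n + c * (r * ε n) := add_le_add_right (mul_le_mul_right (hΦn_diff n x) _) _
          _ = (1 + c * r) * ε n := by ring
      have h2 : potential p α μ x - potential p α (μseq n) x ≤ (1 + c * r) * ε n := by
        rw [hid (μseq n) x, hid μ x]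
        calc f x + c * Φ μ x - (fn n x + c * Φ (μseq n) x)
            ≤ (f x - fn n x) + (c * Φ μ x - c * Φ (μseq n) x) :=
              add_tsub_add_le_tsub_add_tsub
          _ ≤ ε n + c * (Φ μ x - Φ (μseq n) x) := by
              refine add_le_add (le_trans (le_max_right _ _) (hεle n x)) ?_
              rw [tsub_le_iff_right, ← mul_add]
              exact mul_le_mul_right le_tsub_add _
          _ ≤ ε n + c * (r * ε n) := add_le_add_right (mul_le_mul_right (hΦ_diff n x) _) _
          _ = (1 + c * r) * ε n := by ring
      exact max_le h1 h2
    constructor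
    · refine tendsto_of_tendsto_of_tendsto_of_le_of_le tendsto_const_nhds ?_
        (fun n => bot_le) (fun n => iSup_le fun x => hbound n x)
      have := ENNReal.Tendsto.const_mul (a := 1 + c * r) hconv (Or.inr hfin)
      simpa using this
    · refine lt_of_le_of_lt (iSup_le fun n => iSup_le fun x => ?_)
        (show C + c * (r * C) < ⊤ from ?_)
      · rw [hid (μseq n) x]
        refine add_le_add (hfnC n x) (mul_le_mul_right ?_ _)
        exact le_trans (hΦle (μseq n) x) (mul_le_mul_right (iSup_le fun z => hfnC n z) _)
      · exact ENNReal.add_lt_top.2 ⟨hCtop, ENNReal.mul_lt_top ofReal_lt_top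
          (ENNReal.mul_lt_top ofReal_lt_top hCtop)⟩
  · -- case α = 1
    subst hα1
    exact ⟨hconv, lt_of_le_of_lt (iSup_le fun n => iSup_le fun x => hfnC n x) hCtop⟩
  · -- case α > 1
    set c : ℝ≥0∞ := ENNReal.ofReal (α - 1) with hc
    have hid : ∀ (ν : Measure S) [SFinite ν] (x : S),
        potential p 1 ν x = potential p α ν x + c * Φ ν x := fun ν _ x =>
      resolvent_potential' m hp_meas hsymm hCK one_pos hα1 ν x
    have hcan : ∀ {u v w : ℝ≥0∞}, w ≠ ⊤ → u + w ≤ v + w → u ≤ v :=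
      fun h hle => (ENNReal.add_le_add_iff_right h).1 hle
    have hΦfin : ∀ (ν : Measure S) [SFinite ν],
        (⨆ z : S, potential p 1 ν z) < ⊤ → ∀ x, Φ ν x ≠ ⊤ := by
      intro ν _ hb x
      exact (lt_of_le_of_lt (hΦle ν x) (ENNReal.mul_lt_top ofReal_lt_top hb)).ne
    have hbound : ∀ n x,
        max (potential p α (μseq n) x - potential p α μ x)
          (potential p α μ x - potential p α (μseq n) x) ≤ (1 + c * r) * ε n := by
      intro n x
      have h1 : potential p α (μseq n) x - potential p α μ x ≤ (1 + c * r) * ε n := by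
        rw [tsub_le_iff_right]
        refine hcan (w := c * Φ (μseq n) x)
          (ENNReal.mul_ne_top ofReal_ne_top (hΦfin (μseq n) (hμn n) x)) ?_
        calc potential p α (μseq n) x + c * Φ (μseq n) x
            = fn n x := (hid (μseq n) x).symm
          _ ≤ f x + ε n := hε1 n x
          _ = potential p α μ x + c * Φ μ x + ε n := by simp only [hf]; rw [hid μ x]
          _ ≤ potential p α μ x + c * ((Φ μ x - Φ (μseq n) x) + Φ (μseq n) x) + ε n := by
              exact add_le_add_left (add_le_add_right (mul_le_mul_right le_tsub_add _) _) _
          _ = (potential p α μ x + (c * (Φ μ x - Φ (μseq n) x) + ε n)) + c * Φ (μseq n) x := by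
              ring
          _ ≤ ((1 + c * r) * ε n + potential p α μ x) + c * Φ (μseq n) x := by
              refine add_le_add_left ?_ _
              calc potential p α μ x + (c * (Φ μ x - Φ (μseq n) x) + ε n)
                  ≤ potential p α μ x + (c * (r * ε n) + ε n) :=
                    add_le_add_right (add_le_add_left
                      (mul_le_mul_right (hΦ_diff n x) _) _) _
                _ = (1 + c * r) * ε n + potential p α μ x := by ring
      have h2 : potential p α μ x - potential p α (μseq n) x ≤ (1 + c * r) * ε n := by
        rw [tsub_le_iff_right]
        refine hcan (w := c * Φ μ x)
          (ENNReal.mul_ne_top ofReal_ne_top (hΦfin μ hμ x)) ?_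
        calc potential p α μ x + c * Φ μ x
            = f x := (hid μ x).symm
          _ ≤ fn n x + ε n := hε2 n x
          _ = potential p α (μseq n) x + c * Φ (μseq n) x + ε n := by simp only [hfn]; rw [hid (μseq n) x]
          _ ≤ potential p α (μseq n) x + c * ((Φ (μseq n) x - Φ μ x) + Φ μ x) + ε n := by
              exact add_le_add_left (add_le_add_right (mul_le_mul_right le_tsub_add _) _) _
          _ = (potential p α (μseq n) x + (c * (Φ (μseq n) x - Φ μ x) + ε n)) + c * Φ μ x := by
              ring
          _ ≤ ((1 + c * r) * ε n + potential p α (μseq n) x) + c * Φ μ x := by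
              refine add_le_add_left ?_ _
              calc potential p α (μseq n) x + (c * (Φ (μseq n) x - Φ μ x) + ε n)
                  ≤ potential p α (μseq n) x + (c * (r * ε n) + ε n) :=
                    add_le_add_right (add_le_add_left
                      (mul_le_mul_right (hΦn_diff n x) _) _) _
                _ = (1 + c * r) * ε n + potential p α (μseq n) x := by ring
      exact max_le h1 h2
    have hfin : (1 + c * r) ≠ ⊤ :=
      ENNReal.add_ne_top.2 ⟨one_ne_top, ENNReal.mul_ne_top ofReal_ne_top ofReal_ne_top⟩
    constructor
    · refine tendsto_of_tendsto_of_tendsto_of_le_of_le tendsto_const_nhds ?_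
        (fun n => bot_le) (fun n => iSup_le fun x => hbound n x)
      have := ENNReal.Tendsto.const_mul (a := 1 + c * r) hconv (Or.inr hfin)
      simpa using this
    · refine lt_of_le_of_lt (iSup_le fun n => iSup_le fun x => ?_) hCtop
      exact le_trans (potential_mono hα1.le (μseq n) x) (hfnC n x)
end

section
/- Assume in addition: p is jointly continuous on (0,∞) × S × S with values in [0,∞); μ, μ_1, μ_2, … are finite Borel measures on S with μ_n → μ weakly; there is a compact set K_0 ⊆ S with supp(μ_n) ⊆ K_0 for all n ≥ 1 and supp(μ) ⊆ K_0; and for every compact K ⊆ S, lim_{t→0} sup_{n ≥ 1} sup_{x ∈ K} ∫_0^t ∫_S p_s(x,y) μ_n(dy) ds = 0. Then for every compact K ⊆ S, lim_{δ↓0} sup_{x ∈ K} ∫_0^δ ∫_S p_t(x,y) μ(dy) dt = 0. -/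
open MeasureTheory ENNReal Set Filter Topology BoundedContinuousFunction

/-- Under joint continuity of `p`, weak convergence `μ_n → μ` of finite Borel measures all
supported in a common compact `K_0`, and the uniform short-time control
`lim_{t→0} sup_n sup_{x∈K} ∫_0^t ∫_S p_s(x,y) μ_n(dy) ds = 0` for every compact `K`, the
limit measure `μ` satisfies the same short-time control:
`lim_{δ↓0} sup_{x∈K} ∫_0^δ ∫_S p_t(x,y) μ(dy) dt = 0` for every compact `K ⊆ S`. -/
theorem short_time_control_limit_measure
    {S : Type*} [TopologicalSpace S] [LocallyCompactSpace S]
    [TopologicalSpace.SeparableSpace S] [TopologicalSpace.MetrizableSpace S]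
    [MeasurableSpace S] [BorelSpace S]
    (m : Measure S) [SigmaFinite m] [IsFiniteMeasureOnCompacts m]
    (hfull : ∀ U : Set S, IsOpen U → U.Nonempty → 0 < m U)
    (p : ℝ → S → S → ℝ≥0∞)
    (hp_meas : Measurable fun q : ℝ × S × S => p q.1 q.2.1 q.2.2)
    (hsymm : ∀ t > (0 : ℝ), ∀ x y : S, p t x y = p t y x)
    (hCK : ∀ s > (0 : ℝ), ∀ t > (0 : ℝ), ∀ x y : S,
      p (t + s) x y = ∫⁻ z, p t x z * p s z y ∂m)
    (hsub : ∀ t > (0 : ℝ), ∀ x : S, (∫⁻ y, p t x y ∂m) ≤ 1)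
    -- (A1) joint continuity of `p` on `(0,∞) × S × S` with values in `[0,∞)`
    (hp_cont : ContinuousOn (fun q : ℝ × S × S => p q.1 q.2.1 q.2.2)
      {q : ℝ × S × S | 0 < q.1})
    (hp_fin : ∀ t > (0 : ℝ), ∀ x y : S, p t x y ≠ ⊤)
    -- (A2) the measures are finite and `μ_n → μ` weakly
    (μ : Measure S) (μseq : ℕ → Measure S)
    [IsFiniteMeasure μ] [∀ n, IsFiniteMeasure (μseq n)]
    (hweak : ∀ f : S →ᵇ ℝ,
      Filter.Tendsto (fun n => ∫ x, f x ∂(μseq n)) Filter.atTop (nhds (∫ x, f x ∂μ)))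
    -- (A3) common compact support
    (K₀ : Set S) (hK₀ : IsCompact K₀)
    (hsuppn : ∀ n, (μseq n) K₀ᶜ = 0) (hsupp : μ K₀ᶜ = 0)
    -- (A4) uniform short-time control
    (hshort : ∀ K : Set S, IsCompact K →
      Filter.Tendsto
        (fun t : ℝ => ⨆ n, ⨆ x ∈ K, ∫⁻ s in Set.Ioo (0 : ℝ) t, ∫⁻ y, p s x y ∂(μseq n))
        (nhdsWithin 0 (Set.Ioi 0)) (nhds 0)) :
    ∀ K : Set S, IsCompact K →
      Filter.Tendsto
        (fun δ : ℝ => ⨆ x ∈ K, ∫⁻ t in Set.Ioo (0 : ℝ) δ, ∫⁻ y, p t x y ∂μ)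
        (nhdsWithin 0 (Set.Ioi 0)) (nhds 0) := by
  intro K hK
  -- Key: for t > 0 and any x, the inner integrals converge
  have key : ∀ t : ℝ, 0 < t → ∀ x : S,
      Tendsto (fun n => ∫⁻ y, p t x y ∂(μseq n)) atTop (𝓝 (∫⁻ y, p t x y ∂μ)) := by
    intro t ht x
    have hfin : ∀ y, p t x y ≠ ⊤ := hp_fin t ht x
    have hcont : Continuous fun y => p t x y := by
      rw [← continuousOn_univ]
      have hmap : MapsTo (fun y : S => ((t, x, y) : ℝ × S × S)) univ {q | 0 < q.1} :=
        fun y _ => ht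
      have hc : ContinuousOn (fun y : S => ((t, x, y) : ℝ × S × S)) univ :=
        (Continuous.continuousOn (by continuity))
      exact hp_cont.comp hc hmap
    have hcontR : Continuous fun y => (p t x y).toReal := by
      rw [continuous_iff_continuousAt]
      intro y
      exact (ENNReal.tendsto_toReal (hfin y)).comp (hcont.tendsto y)
    obtain ⟨C, hC⟩ := hK₀.exists_bound_of_continuousOn hcontR.continuousOn
    set C' : ℝ := max C 0 with hC'
    set g : S → ℝ := fun y => min ((p t x y).toReal) C' with hg
    have hg_cont : Continuous g := hcontR.min continuous_const
    have hg_nonneg : ∀ y, 0 ≤ g y := fun y =>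
      le_min ENNReal.toReal_nonneg (le_max_right _ _)
    have hg_bd : ∀ y, ‖g y‖ ≤ C' := by
      intro y
      rw [Real.norm_eq_abs, abs_le]
      refine ⟨?_, min_le_right _ _⟩
      have h0 : (0 : ℝ) ≤ C' := le_max_right _ _
      linarith [hg_nonneg y]
    set G : S →ᵇ ℝ := BoundedContinuousFunction.ofNormedAddCommGroup g hg_cont C' hg_bd
      with hGdef
    have hGK : ∀ y ∈ K₀, ENNReal.ofReal (G y) = p t x y := by
      intro y hy
      have h1 : (p t x y).toReal ≤ C' := by
        have := hC y hy
        rw [Real.norm_eq_abs, abs_le] at this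
        exact this.2.trans (le_max_left _ _)
      have : G y = (p t x y).toReal := min_eq_left h1
      rw [this, ENNReal.ofReal_toReal (hfin y)]
    have hrepr : ∀ ν : Measure S, ∀ _ : IsFiniteMeasure ν, ν K₀ᶜ = 0 →
        ∫⁻ y, p t x y ∂ν = ENNReal.ofReal (∫ y, G y ∂ν) := by
      intro ν hνfin hν
      have hae : ∀ᵐ y ∂ν, p t x y = ENNReal.ofReal (G y) := by
        rw [ae_iff]
        refine measure_mono_null (fun y hy => ?_) hν
        simp only [mem_setOf_eq] at hy
        intro hyK
        exact hy ((hGK y hyK).symm)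
      rw [lintegral_congr_ae hae,
        ofReal_integral_eq_lintegral_ofReal (G.integrable ν)
          (Eventually.of_forall hg_nonneg)]
    have h1 : ∀ n, ∫⁻ y, p t x y ∂(μseq n) = ENNReal.ofReal (∫ y, G y ∂(μseq n)) :=
      fun n => hrepr (μseq n) inferInstance (hsuppn n)
    have h2 : ∫⁻ y, p t x y ∂μ = ENNReal.ofReal (∫ y, G y ∂μ) :=
      hrepr μ inferInstance hsupp
    simp only [h1, h2]
    exact (ENNReal.continuous_ofReal.tendsto _).comp (hweak G)
  -- measurability of the inner integrals as functions of t
  have hmeas : ∀ n : ℕ, ∀ x : S, Measurable fun t : ℝ => ∫⁻ y, p t x y ∂(μseq n) := by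
    intro n x
    have hu : Measurable (Function.uncurry fun (t : ℝ) (y : S) => p t x y) := by
      have : (Function.uncurry fun (t : ℝ) (y : S) => p t x y)
          = (fun q : ℝ × S × S => p q.1 q.2.1 q.2.2) ∘ (fun q : ℝ × S => (q.1, x, q.2)) :=
        rfl
      rw [this]
      exact hp_meas.comp (measurable_fst.prodMk (measurable_const.prodMk measurable_snd))
    exact hu.lintegral_prod_right
  -- upper bound by the uniform quantity
  have hupper : ∀ δ : ℝ, (⨆ x ∈ K, ∫⁻ t in Set.Ioo (0 : ℝ) δ, ∫⁻ y, p t x y ∂μ)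
      ≤ ⨆ n, ⨆ x ∈ K, ∫⁻ t in Set.Ioo (0 : ℝ) δ, ∫⁻ y, p t x y ∂(μseq n) := by
    intro δ
    refine iSup₂_le fun x hx => ?_
    calc ∫⁻ t in Set.Ioo (0 : ℝ) δ, ∫⁻ y, p t x y ∂μ
        ≤ ∫⁻ t in Set.Ioo (0 : ℝ) δ,
            liminf (fun n => ∫⁻ y, p t x y ∂(μseq n)) atTop := by
          refine lintegral_mono_ae ?_
          refine (ae_restrict_iff' measurableSet_Ioo).2 (ae_of_all _ fun t ht => ?_)
          exact le_of_eq ((key t ht.1 x).liminf_eq).symm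
      _ ≤ liminf (fun n => ∫⁻ t in Set.Ioo (0 : ℝ) δ, ∫⁻ y, p t x y ∂(μseq n)) atTop :=
          lintegral_liminf_le' fun n => (hmeas n x).aemeasurable
      _ ≤ ⨆ n, ∫⁻ t in Set.Ioo (0 : ℝ) δ, ∫⁻ y, p t x y ∂(μseq n) :=
          le_trans liminf_le_limsup limsup_le_iSup
      _ ≤ ⨆ n, ⨆ x ∈ K, ∫⁻ t in Set.Ioo (0 : ℝ) δ, ∫⁻ y, p t x y ∂(μseq n) := by
          exact iSup_mono fun n => le_iSup₂ (f := fun (x : S) (_ : x ∈ K) =>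
            ∫⁻ t in Set.Ioo (0 : ℝ) δ, ∫⁻ y, p t x y ∂(μseq n)) x hx
  exact tendsto_of_tendsto_of_tendsto_of_le_of_le tendsto_const_nhds (hshort K hK)
    (fun δ => zero_le) hupper
end

section
/- Assume: (A1) p is jointly continuous on (0,∞) × S × S with values in [0,∞); (A2) μ, μ_1, μ_2, … are finite Borel measures on S with μ_n → μ weakly; (A3) there is a compact set K_0 ⊆ S with supp(μ_n) ⊆ K_0 for all n ≥ 1 and supp(μ) ⊆ K_0; (A4) for every compact K ⊆ S, lim_{t→0} sup_{n ≥ 1} sup_{x ∈ K} ∫_0^t ∫_S p_s(x,y) μ_n(dy) ds = 0. Then lim_{n→∞} sup_{x ∈ K_0} |G_1μ_n(x) − G_1μ(x)| = 0; in particular, since μ_n + μ is supported in K_0, lim_{n→∞} ∥G_1μ_n − G_1μ∥_{L^∞(μ_n+μ)} = 0. -/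
open MeasureTheory ENNReal Set Filter Topology BoundedContinuousFunction

section Aux

set_option linter.unusedSectionVars false
set_option linter.unusedVariables false

lemma tsub_le_ofReal_abs {a b : ℝ≥0∞} (ha : a ≠ ⊤) (hb : b ≠ ⊤) :
    a - b ≤ ENNReal.ofReal |a.toReal - b.toReal| := by
  rcases le_total a b with h | h
  · simp [tsub_eq_zero_of_le h]
  · have h1 : (a - b).toReal = a.toReal - b.toReal := ENNReal.toReal_sub_of_le h ha
    calc a - b = ENNReal.ofReal (a - b).toReal := (ENNReal.ofReal_toReal (by
          exact ENNReal.sub_ne_top ha)).symm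
      _ ≤ ENNReal.ofReal |a.toReal - b.toReal| := by
          rw [h1]; exact ENNReal.ofReal_le_ofReal (le_abs_self _)

lemma tsub3 {a b c a' b' c' : ℝ≥0∞} : (a + b + c) - (a' + b' + c') ≤ a + (b - b') + c := by
  rw [tsub_le_iff_right]
  calc a + b + c ≤ a + ((b - b') + b') + c := by
        gcongr; exact le_tsub_add
    _ = (a + (b - b') + c) + b' := by ring
    _ ≤ (a + (b - b') + c) + (a' + b' + c') := by
        gcongr
        calc b' ≤ a' + b' := le_add_self
          _ ≤ a' + b' + c' := le_self_add

lemma iSup_min_eq {a : ℝ≥0∞} (ha : a ≠ ⊤) : (⨆ k : ℕ, min a (ENNReal.ofReal k)) = a := by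
  refine le_antisymm (iSup_le fun k => min_le_left _ _) ?_
  obtain ⟨k, hk⟩ := exists_nat_ge a.toReal
  have : a ≤ ENNReal.ofReal k := by
    rw [← ENNReal.ofReal_toReal ha]
    exact ENNReal.ofReal_le_ofReal hk
  calc a = min a (ENNReal.ofReal k) := (min_eq_left this).symm
    _ ≤ ⨆ k : ℕ, min a (ENNReal.ofReal k) := le_iSup (fun k : ℕ => min a (ENNReal.ofReal k)) k

lemma lintegral_eq_iSup_min {S : Type*} [MeasurableSpace S] (ν : Measure S)
    (g : S → ℝ≥0∞) (hg : Measurable g) (hfin : ∀ y, g y ≠ ⊤) :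
    ∫⁻ y, g y ∂ν = ⨆ k : ℕ, ∫⁻ y, min (g y) (ENNReal.ofReal k) ∂ν := by
  rw [← lintegral_iSup (fun k => hg.min measurable_const)]
  · exact lintegral_congr fun y => (iSup_min_eq (hfin y)).symm
  · intro i j hij y
    exact min_le_min le_rfl (ENNReal.ofReal_le_ofReal (by exact_mod_cast hij))

lemma conj22 : Real.HolderConjugate 2 2 := by constructor <;> norm_num

lemma lintegral_CS {α : Type*} [MeasurableSpace α] (ν : Measure α) (f g : α → ℝ≥0∞)
    (hf : AEMeasurable f ν) (hg : AEMeasurable g ν) :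
    (∫⁻ a, f a * g a ∂ν) ^ 2 ≤ (∫⁻ a, f a ^ 2 ∂ν) * (∫⁻ a, g a ^ 2 ∂ν) := by
  have h := ENNReal.lintegral_mul_le_Lp_mul_Lq ν conj22 hf hg
  have e : ∀ h : α → ℝ≥0∞, (∫⁻ a, h a ^ (2:ℝ) ∂ν) = ∫⁻ a, h a ^ 2 ∂ν := by
    intro h; refine lintegral_congr fun a => ?_; rw [← ENNReal.rpow_natCast (h a) 2]; norm_num
  calc (∫⁻ a, f a * g a ∂ν) ^ 2 = (∫⁻ a, (f * g) a ∂ν) ^ 2 := rfl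
    _ ≤ ((∫⁻ a, f a ^ (2:ℝ) ∂ν) ^ (1/2:ℝ) * (∫⁻ a, g a ^ (2:ℝ) ∂ν) ^ (1/2:ℝ)) ^ 2 := by gcongr
    _ = (∫⁻ a, f a ^ 2 ∂ν) * (∫⁻ a, g a ^ 2 ∂ν) := by
        rw [mul_pow, ← ENNReal.rpow_natCast (_ ^ (1/2:ℝ)) 2, ← ENNReal.rpow_natCast (_ ^ (1/2:ℝ)) 2,
          ← ENNReal.rpow_mul, ← ENNReal.rpow_mul, e, e]
        norm_num

section Kernel
variable {S : Type*} [MeasurableSpace S]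
  (m : Measure S) [SigmaFinite m]
  (p : ℝ → S → S → ℝ≥0∞)
  (hp_meas : Measurable fun q : ℝ × S × S => p q.1 q.2.1 q.2.2)
  (hsymm : ∀ t > (0 : ℝ), ∀ x y : S, p t x y = p t y x)
  (hCK : ∀ s > (0 : ℝ), ∀ t > (0 : ℝ), ∀ x y : S,
    p (t + s) x y = ∫⁻ z, p t x z * p s z y ∂m)
  (hsub : ∀ t > (0 : ℝ), ∀ x : S, (∫⁻ y, p t x y ∂m) ≤ 1)

include hp_meas in
lemma meas_slice (t : ℝ) (x : S) : Measurable (fun y => p t x y) :=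
  hp_meas.comp (measurable_const.prodMk (measurable_const.prodMk measurable_id))

include hp_meas in
lemma meas_slice2 (t : ℝ) : Measurable (fun wz : S × S => p t wz.1 wz.2) :=
  hp_meas.comp (measurable_const.prodMk measurable_id)

include hp_meas hsymm hCK hsub in
lemma diag_mono (x : S) {δ t : ℝ} (hδ : 0 < δ) (hle : δ ≤ t) : p t x x ≤ p δ x x := by
  rcases eq_or_lt_of_le hle with rfl | hlt
  · exact le_rfl
  set u := δ / 2 with hu_def
  set s := (t - δ) / 2 with hs_def
  have hu : 0 < u := by positivity
  have hs : 0 < s := by simp [hs_def]; linarith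
  have hus : 0 < u + s := by linarith
  -- p δ x x = ∫ p u x w ^ 2
  have hδeq : p δ x x = ∫⁻ w, p u x w ^ 2 ∂m := by
    have : δ = u + u := by rw [hu_def]; ring
    rw [this, hCK u hu u hu x x]
    refine lintegral_congr fun w => ?_
    rw [hsymm u hu w x, sq]
  have hteq : p t x x = ∫⁻ z, p (u + s) x z ^ 2 ∂m := by
    have : t = (u + s) + (u + s) := by rw [hu_def, hs_def]; ring
    rw [this, hCK (u+s) hus (u+s) hus x x]
    refine lintegral_congr fun z => ?_
    rw [hsymm (u+s) hus z x, sq]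
  -- key pointwise bound
  have key : ∀ z : S, p (u + s) x z ^ 2 ≤ ∫⁻ w, p u x w ^ 2 * p s w z ∂m := by
    intro z
    have hck := hCK s hs u hu x z
    set ν : Measure S := m.withDensity (fun w => p s w z) with hν
    have hmeasz : Measurable fun w => p s w z :=
      (meas_slice2 p hp_meas s).comp (measurable_id.prodMk measurable_const)
    have hint : ∀ f : S → ℝ≥0∞, Measurable f →
        (∫⁻ w, f w ∂ν) = ∫⁻ w, f w * p s w z ∂m := by
      intro f hf
      rw [hν, lintegral_withDensity_eq_lintegral_mul m hmeasz hf]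
      exact lintegral_congr fun w => mul_comm _ _
    have hν1 : (∫⁻ w, (1:ℝ≥0∞) ^ 2 ∂ν) ≤ 1 := by
      rw [hint _ measurable_const]
      calc (∫⁻ w, 1 ^ 2 * p s w z ∂m) = ∫⁻ w, p s z w ∂m := by
            refine lintegral_congr fun w => by rw [one_pow, one_mul, hsymm s hs w z]
        _ ≤ 1 := hsub s hs z
    have hcs := lintegral_CS ν (fun w => p u x w) (fun _ => 1)
      (meas_slice p hp_meas u x).aemeasurable aemeasurable_const
    rw [hint (fun w => p u x w * 1) ((meas_slice p hp_meas u x).mul measurable_const),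
        hint (fun w => p u x w ^ 2) ((meas_slice p hp_meas u x).pow measurable_const)] at hcs
    calc p (u+s) x z ^ 2 = (∫⁻ w, p u x w * 1 * p s w z ∂m) ^ 2 := by
          rw [hck]; congr 1; exact lintegral_congr fun w => by rw [mul_one]
      _ ≤ (∫⁻ w, p u x w ^ 2 * p s w z ∂m) * ∫⁻ w, (1:ℝ≥0∞) ^ 2 ∂ν := hcs
      _ ≤ (∫⁻ w, p u x w ^ 2 * p s w z ∂m) * 1 := by gcongr
      _ = _ := mul_one _
  calc p t x x = ∫⁻ z, p (u + s) x z ^ 2 ∂m := hteq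
    _ ≤ ∫⁻ z, ∫⁻ w, p u x w ^ 2 * p s w z ∂m ∂m := lintegral_mono key
    _ = ∫⁻ w, ∫⁻ z, p u x w ^ 2 * p s w z ∂m ∂m := by
        rw [lintegral_lintegral_swap]
        exact (((meas_slice p hp_meas u x).pow measurable_const).comp measurable_snd |>.mul
          ((meas_slice2 p hp_meas s).comp (measurable_snd.prodMk measurable_fst))).aemeasurable
    _ = ∫⁻ w, p u x w ^ 2 * ∫⁻ z, p s w z ∂m ∂m := by
        refine lintegral_congr fun w => ?_
        rw [lintegral_const_mul _ (meas_slice p hp_meas s w)]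
    _ ≤ ∫⁻ w, p u x w ^ 2 * 1 ∂m := by
        refine lintegral_mono fun w => ?_
        gcongr
        exact hsub s hs w
    _ = p δ x x := by rw [hδeq]; exact lintegral_congr fun w => mul_one _

end Kernel

section Kernel2
variable {S : Type*} [MeasurableSpace S]
  (m : Measure S) [SigmaFinite m]
  (p : ℝ → S → S → ℝ≥0∞)
  (hp_meas : Measurable fun q : ℝ × S × S => p q.1 q.2.1 q.2.2)
  (hsymm : ∀ t > (0 : ℝ), ∀ x y : S, p t x y = p t y x)
  (hCK : ∀ s > (0 : ℝ), ∀ t > (0 : ℝ), ∀ x y : S,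
    p (t + s) x y = ∫⁻ z, p t x z * p s z y ∂m)
  (hsub : ∀ t > (0 : ℝ), ∀ x : S, (∫⁻ y, p t x y ∂m) ≤ 1)

include hp_meas hsymm hCK hsub in
lemma offdiag_bound (x y : S) {δ t : ℝ} (hδ : 0 < δ) (hle : δ ≤ t) :
    p t x y ≤ max (p δ x x) (p δ y y) := by
  have ht : 0 < t := lt_of_lt_of_le hδ hle
  have ht2 : 0 < t / 2 := by positivity
  have hdiag : ∀ w : S, p t w w = ∫⁻ z, p (t/2) w z ^ 2 ∂m := by
    intro w
    have h := hCK (t/2) ht2 (t/2) ht2 w w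
    rw [add_halves] at h
    rw [h]
    exact lintegral_congr fun z => by rw [hsymm (t/2) ht2 z w, sq]
  have hsq : p t x y ^ 2 ≤ p t x x * p t y y := by
    have h := hCK (t/2) ht2 (t/2) ht2 x y
    rw [add_halves] at h
    rw [h]
    calc (∫⁻ z, p (t/2) x z * p (t/2) z y ∂m) ^ 2
        ≤ (∫⁻ z, p (t/2) x z ^ 2 ∂m) * ∫⁻ z, p (t/2) z y ^ 2 ∂m :=
          lintegral_CS m _ _ (meas_slice p hp_meas (t/2) x).aemeasurable
            ((meas_slice2 p hp_meas (t/2)).comp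
              (measurable_id.prodMk measurable_const)).aemeasurable
      _ = p t x x * p t y y := by
          rw [hdiag x, hdiag y]
          congr 1
          exact lintegral_congr fun z => by rw [hsymm (t/2) ht2 z y]
  have hb : p t x y ^ 2 ≤ max (p δ x x) (p δ y y) ^ 2 := by
    calc p t x y ^ 2 ≤ p t x x * p t y y := hsq
      _ ≤ max (p δ x x) (p δ y y) * max (p δ x x) (p δ y y) := by
          gcongr
          · exact le_max_of_le_left (diag_mono m p hp_meas hsymm hCK hsub x hδ hle)
          · exact le_max_of_le_right (diag_mono m p hp_meas hsymm hCK hsub y hδ hle)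
      _ = max (p δ x x) (p δ y y) ^ 2 := (sq _).symm
  by_contra hc
  exact absurd hb (not_le.2 (ENNReal.pow_lt_pow_left two_ne_zero (not_le.1 hc)))

end Kernel2

section ContPort
variable {S : Type*} [TopologicalSpace S] [MeasurableSpace S] [BorelSpace S]
  (p : ℝ → S → S → ℝ≥0∞)
  (hp_cont : ContinuousOn (fun q : ℝ × S × S => p q.1 q.2.1 q.2.2) {q : ℝ × S × S | 0 < q.1})
  (hp_fin : ∀ t > (0:ℝ), ∀ x y : S, p t x y ≠ ⊤)

lemma open_posTime : IsOpen {q : ℝ × S × S | 0 < q.1} :=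
  isOpen_lt continuous_const continuous_fst

include hp_cont in
lemma cont_at_pos {t : ℝ} (ht : 0 < t) {X : Type*} [TopologicalSpace X]
    (φ : X → S) (ψ : X → S) (hφ : Continuous φ) (hψ : Continuous ψ) :
    Continuous fun x => p t (φ x) (ψ x) := by
  rw [continuous_iff_continuousAt]
  intro x
  have h1 : ContinuousAt (fun q : ℝ × S × S => p q.1 q.2.1 q.2.2) (t, φ x, ψ x) :=
    hp_cont.continuousAt ((open_posTime (S := S)).mem_nhds ht)
  exact Filter.Tendsto.comp h1 ((continuous_const.prodMk (hφ.prodMk hψ)).tendsto x)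

include hp_cont hp_fin in
lemma cont_toReal_at_pos {t : ℝ} (ht : 0 < t) (x : S) :
    Continuous fun y => (p t x y).toReal := by
  rw [continuous_iff_continuousAt]
  intro y
  exact (ENNReal.tendsto_toReal (hp_fin t ht x y)).comp
    ((cont_at_pos p hp_cont ht (fun _ => x) id continuous_const continuous_id).continuousAt)

variable (μ : Measure S) (μseq : ℕ → Measure S)
  [IsFiniteMeasure μ] [∀ n, IsFiniteMeasure (μseq n)]
  (hweak : ∀ f : S →ᵇ ℝ,
    Filter.Tendsto (fun n => ∫ x, f x ∂(μseq n)) Filter.atTop (nhds (∫ x, f x ∂μ)))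

include hp_cont hp_fin hweak in
lemma tendsto_lintegral_min {t : ℝ} (ht : 0 < t) (x : S) {k : ℝ} (hk : 0 ≤ k) :
    Tendsto (fun n => ∫⁻ y, min (p t x y) (ENNReal.ofReal k) ∂(μseq n)) atTop
      (nhds (∫⁻ y, min (p t x y) (ENNReal.ofReal k) ∂μ)) := by
  set fR : S → ℝ := fun y => min ((p t x y).toReal) k with hfR
  have hcont : Continuous fR :=
    (cont_toReal_at_pos p hp_cont hp_fin ht x).min continuous_const
  have hbd : ∀ y, ‖fR y‖ ≤ k := by
    intro y
    rw [Real.norm_eq_abs, abs_le]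
    constructor
    · have : 0 ≤ fR y := le_min ENNReal.toReal_nonneg hk
      linarith
    · exact min_le_right _ _
  set f : S →ᵇ ℝ := BoundedContinuousFunction.ofNormedAddCommGroup fR hcont k hbd with hf
  have hofReal : ∀ y, ENNReal.ofReal (fR y) = min (p t x y) (ENNReal.ofReal k) := by
    intro y
    have : ENNReal.ofReal (min ((p t x y).toReal) k)
        = min (ENNReal.ofReal ((p t x y).toReal)) (ENNReal.ofReal k) :=
      Monotone.map_min (fun _ _ h => ENNReal.ofReal_le_ofReal h)
    rw [hfR]; rw [this, ENNReal.ofReal_toReal (hp_fin t ht x y)]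
  have key : ∀ (ν : Measure S), IsFiniteMeasure ν →
      ENNReal.ofReal (∫ y, f y ∂ν) = ∫⁻ y, min (p t x y) (ENNReal.ofReal k) ∂ν := by
    intro ν hν
    rw [ofReal_integral_eq_lintegral_ofReal (f.integrable ν)
      (Filter.Eventually.of_forall fun y => le_min ENNReal.toReal_nonneg hk)]
    exact lintegral_congr fun y => hofReal y
  have h1 := (ENNReal.continuous_ofReal.tendsto _).comp (hweak f)
  simp only [Function.comp_def] at h1
  rw [key μ inferInstance] at h1
  refine h1.congr fun n => key (μseq n) inferInstance

end ContPort

section Repr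
variable {S : Type*} [MeasurableSpace S]
  (p : ℝ → S → S → ℝ≥0∞)
  (hp_meas : Measurable fun q : ℝ × S × S => p q.1 q.2.1 q.2.2)

include hp_meas in
lemma meas_F (x : S) (ν : Measure S) [SFinite ν] :
    Measurable fun t => ∫⁻ y, p t x y ∂ν := by
  apply Measurable.lintegral_prod_right (f := fun t y => p t x y)
  exact hp_meas.comp (measurable_fst.prodMk (measurable_const.prodMk measurable_snd))

include hp_meas in
lemma potential_repr (x : S) (ν : Measure S) [IsFiniteMeasure ν] :
    potential p 1 ν x = ∫⁻ t in Set.Ioi (0:ℝ),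
      ENNReal.ofReal (Real.exp (-1 * t)) * ∫⁻ y, p t x y ∂ν := by
  rw [potential]
  have hmeas : Measurable (Function.uncurry fun (y : S) (t : ℝ) =>
      ENNReal.ofReal (Real.exp (-1 * t)) * p t x y) := by
    apply Measurable.mul
    · exact (Real.measurable_exp.comp (measurable_snd.const_mul (-1))).ennreal_ofReal
    · exact hp_meas.comp (measurable_snd.prodMk (measurable_const.prodMk measurable_fst))
  have hm : ∀ t : ℝ, Measurable fun y => p t x y := fun t =>
    hp_meas.comp (measurable_const.prodMk (measurable_const.prodMk measurable_id))
  calc (∫⁻ y, potDensity p 1 x y ∂ν)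
      = ∫⁻ y, (∫⁻ t in Set.Ioi (0:ℝ), ENNReal.ofReal (Real.exp (-1 * t)) * p t x y) ∂ν := rfl
    _ = ∫⁻ t in Set.Ioi (0:ℝ), (∫⁻ y, ENNReal.ofReal (Real.exp (-1 * t)) * p t x y ∂ν) := by
        rw [lintegral_lintegral_swap hmeas.aemeasurable]
    _ = _ := by
        refine setLIntegral_congr_fun measurableSet_Ioi (fun t _ => ?_)
        rw [lintegral_const_mul _ (hm t)]
end Repr

end Aux

/-- Under (A1) joint continuity of `p`, (A2) weak convergence `μ_n → μ` of finite Borel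
measures, (A3) a common compact support `K_0`, and (A4) uniform short-time control, the
`1`-potentials converge uniformly on `K_0`: `sup_{x∈K_0} |G_1μ_n(x) − G_1μ(x)| → 0`;
in particular `‖G_1μ_n − G_1μ‖_{L^∞(μ_n+μ)} → 0`. (Absolute differences of `[0,∞]`-valued
quantities are expressed as `max (a - b) (b - a)`.) -/
theorem sufficient_condition_strong_assumption
    {S : Type*} [TopologicalSpace S] [LocallyCompactSpace S]
    [TopologicalSpace.SeparableSpace S] [TopologicalSpace.MetrizableSpace S]
    [MeasurableSpace S] [BorelSpace S]
    (m : Measure S) [SigmaFinite m] [IsFiniteMeasureOnCompacts m]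
    (hfull : ∀ U : Set S, IsOpen U → U.Nonempty → 0 < m U)
    (p : ℝ → S → S → ℝ≥0∞)
    (hp_meas : Measurable fun q : ℝ × S × S => p q.1 q.2.1 q.2.2)
    (hsymm : ∀ t > (0 : ℝ), ∀ x y : S, p t x y = p t y x)
    (hCK : ∀ s > (0 : ℝ), ∀ t > (0 : ℝ), ∀ x y : S,
      p (t + s) x y = ∫⁻ z, p t x z * p s z y ∂m)
    (hsub : ∀ t > (0 : ℝ), ∀ x : S, (∫⁻ y, p t x y ∂m) ≤ 1)
    -- (A1)
    (hp_cont : ContinuousOn (fun q : ℝ × S × S => p q.1 q.2.1 q.2.2)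
      {q : ℝ × S × S | 0 < q.1})
    (hp_fin : ∀ t > (0 : ℝ), ∀ x y : S, p t x y ≠ ⊤)
    -- (A2)
    (μ : Measure S) (μseq : ℕ → Measure S)
    [IsFiniteMeasure μ] [∀ n, IsFiniteMeasure (μseq n)]
    (hweak : ∀ f : S →ᵇ ℝ,
      Filter.Tendsto (fun n => ∫ x, f x ∂(μseq n)) Filter.atTop (nhds (∫ x, f x ∂μ)))
    -- (A3)
    (K₀ : Set S) (hK₀ : IsCompact K₀)
    (hsuppn : ∀ n, (μseq n) K₀ᶜ = 0) (hsupp : μ K₀ᶜ = 0)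
    -- (A4)
    (hshort : ∀ K : Set S, IsCompact K →
      Filter.Tendsto
        (fun t : ℝ => ⨆ n, ⨆ x ∈ K, ∫⁻ s in Set.Ioo (0 : ℝ) t, ∫⁻ y, p s x y ∂(μseq n))
        (nhdsWithin 0 (Set.Ioi 0)) (nhds 0)) :
    Filter.Tendsto
      (fun n => ⨆ x ∈ K₀, max (potential p 1 (μseq n) x - potential p 1 μ x)
        (potential p 1 μ x - potential p 1 (μseq n) x))
      Filter.atTop (nhds 0)
    ∧ Filter.Tendsto
        (fun n => essSup
          (fun x => max (potential p 1 (μseq n) x - potential p 1 μ x)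
            (potential p 1 μ x - potential p 1 (μseq n) x))
          (μseq n + μ))
        Filter.atTop (nhds 0) := by
  letI : MetricSpace S := TopologicalSpace.metrizableSpaceMetric S
  have haen : ∀ n, ∀ᵐ y ∂(μseq n), y ∈ K₀ := fun n => by
    rw [ae_iff]; exact hsuppn n
  have haeμ : ∀ᵐ y ∂μ, y ∈ K₀ := by rw [ae_iff]; exact hsupp
  -- masses
  have hmass : Tendsto (fun n => ((μseq n) univ).toReal) atTop (𝓝 ((μ univ).toReal)) := by
    have h := hweak (BoundedContinuousFunction.const S (1:ℝ))
    have h' := h; simp at h'; exact h'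
  obtain ⟨B, hB⟩ := hmass.bddAbove_range
  set Mr : ℝ := max B ((μ univ).toReal) + 1 with hMr_def
  have hMrn : ∀ n, ((μseq n) univ).toReal ≤ Mr := fun n => by
    have := hB (mem_range_self n)
    have h2 : B ≤ Mr := by rw [hMr_def]; have := le_max_left B ((μ univ).toReal); linarith
    linarith
  have hMrμ : (μ univ).toReal ≤ Mr := by
    rw [hMr_def]; have := le_max_right B ((μ univ).toReal); linarith
  have hMr0 : 0 ≤ Mr := le_trans ENNReal.toReal_nonneg hMrμ
  set M : ℝ≥0∞ := ENNReal.ofReal Mr with hMdef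
  have hMne : M ≠ ⊤ := ofReal_ne_top
  have hMn : ∀ n, (μseq n) univ ≤ M := fun n => by
    rw [hMdef, ← ENNReal.ofReal_toReal (measure_ne_top (μseq n) univ)]
    exact ENNReal.ofReal_le_ofReal (hMrn n)
  have hMμ : μ univ ≤ M := by
    rw [hMdef, ← ENNReal.ofReal_toReal (measure_ne_top μ univ)]
    exact ENNReal.ofReal_le_ofReal hMrμ
  have hmslice : ∀ (t : ℝ) (x : S), Measurable fun y => p t x y := fun t x =>
    meas_slice p hp_meas t x
  -- the weight
  set w : ℝ → ℝ≥0∞ := fun t => ENNReal.ofReal (Real.exp (-1 * t)) with hwdef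
  have hw1 : ∀ t : ℝ, 0 ≤ t → w t ≤ 1 := fun t ht => by
    rw [hwdef]
    exact ENNReal.ofReal_le_one.mpr (Real.exp_le_one_iff.mpr (by linarith))
  have hwmeas : Measurable w :=
    (Real.measurable_exp.comp (measurable_id.const_mul (-1))).ennreal_ofReal
  -- MAIN uniform statement
  have main : Filter.Tendsto
      (fun n => ⨆ x ∈ K₀, max (potential p 1 (μseq n) x - potential p 1 μ x)
        (potential p 1 μ x - potential p 1 (μseq n) x))
      Filter.atTop (nhds 0) := by
    rw [ENNReal.tendsto_atTop_zero]
    intro ε hε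
    set ε₀ : ℝ≥0∞ := min ε 1 with hε₀def
    have hε₀pos : 0 < ε₀ := lt_min hε zero_lt_one
    have hε₀ne : ε₀ ≠ ⊤ := ne_top_of_le_ne_top one_ne_top (min_le_right _ _)
    have hε₀le : ε₀ ≤ ε := min_le_left _ _
    set e4 : ℝ≥0∞ := ε₀ / 4 with he4def
    have he4pos : 0 < e4 := ENNReal.div_pos hε₀pos.ne' (by norm_num)
    have he4ne : e4 ≠ ⊤ := by
      rw [he4def]; exact (ENNReal.div_lt_top hε₀ne (by norm_num)).ne
    have he4sum : e4 + e4 + e4 ≤ ε₀ := by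
      have h4 : e4 + e4 + e4 + e4 = 4 * e4 := by ring
      have h5 : (4:ℝ≥0∞) * (ε₀ / 4) = ε₀ := ENNReal.mul_div_cancel' (by norm_num) (by norm_num)
      calc e4 + e4 + e4 ≤ e4 + e4 + e4 + e4 := le_self_add
        _ = ε₀ := by rw [h4, he4def, h5]
    -- choose δ
    have hsh := hshort K₀ hK₀
    rw [ENNReal.tendsto_nhds_zero] at hsh
    obtain ⟨δ, hAδ, (hδpos : (0:ℝ) < δ)⟩ := ((hsh e4 he4pos).and self_mem_nhdsWithin).exists
    -- the constant C
    set C : ℝ≥0∞ := ⨆ x ∈ K₀, p δ x x with hCdef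
    have hCne : C ≠ ⊤ := by
      rcases K₀.eq_empty_or_nonempty with h | h
      · rw [hCdef, h]; simp
      · obtain ⟨x₀, hx₀, hmax⟩ := hK₀.exists_isMaxOn h
          ((cont_at_pos p hp_cont hδpos id id continuous_id continuous_id).continuousOn)
        exact ne_top_of_le_ne_top (hp_fin δ hδpos x₀ x₀) (iSup₂_le fun x hx => hmax hx)
    have hpC : ∀ t : ℝ, δ ≤ t → ∀ x ∈ K₀, ∀ y ∈ K₀, p t x y ≤ C := by
      intro t ht x hx y hy
      refine le_trans (offdiag_bound m p hp_meas hsymm hCK hsub x y hδpos ht) ?_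
      exact max_le (le_biSup (fun z => p δ z z) hx) (le_biSup (fun z => p δ z z) hy)
    have hCM : C * M ≠ ⊤ := ENNReal.mul_ne_top hCne hMne
    -- uniform bound on F
    have hFb : ∀ (ν : Measure S), ν K₀ᶜ = 0 → ν univ ≤ M →
        ∀ t : ℝ, δ ≤ t → ∀ x ∈ K₀, (∫⁻ y, p t x y ∂ν) ≤ C * M := by
      intro ν hν hνM t ht x hx
      have hres : ν.restrict K₀ = ν :=
        Measure.restrict_eq_self_of_ae_mem (by rw [ae_iff]; exact hν)
      calc ∫⁻ y, p t x y ∂ν = ∫⁻ y in K₀, p t x y ∂ν := by rw [hres]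
        _ ≤ ∫⁻ _ in K₀, C ∂ν := setLIntegral_mono measurable_const fun y hy => hpC t ht x hx y hy
        _ = C * ν K₀ := setLIntegral_const K₀ C
        _ ≤ C * M := mul_le_mul' le_rfl ((measure_mono (subset_univ _)).trans hνM)
    -- choose T
    obtain ⟨T, hδT, hTe⟩ : ∃ T, δ ≤ T ∧ ENNReal.ofReal (Real.exp (-T)) * (C * M) ≤ e4 := by
      have h1 : Tendsto (fun T : ℝ => ENNReal.ofReal (Real.exp (-T))) atTop (𝓝 0) := by
        have := (ENNReal.continuous_ofReal.tendsto 0).comp Real.tendsto_exp_neg_atTop_nhds_zero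
        simpa [Function.comp_def] using this
      have h2 : Tendsto (fun T : ℝ => ENNReal.ofReal (Real.exp (-T)) * (C * M)) atTop (𝓝 0) := by
        have := ENNReal.Tendsto.mul_const h1 (Or.inr hCM)
        simpa using this
      rw [ENNReal.tendsto_nhds_zero] at h2
      obtain ⟨T, hT1, hT2⟩ := ((eventually_ge_atTop δ).and (h2 e4 he4pos)).exists
      exact ⟨T, hT1, hT2⟩
    -- choose ε'
    set ε' : ℝ := e4.toReal / (T - δ + 1) with hε'def
    have hTδ0 : (0:ℝ) ≤ T - δ := by linarith
    have hε'pos : 0 < ε' := div_pos (ENNReal.toReal_pos he4pos.ne' he4ne) (by linarith)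
    have hε'vol : ENNReal.ofReal ε' * volume (Icc δ T) ≤ e4 := by
      rw [Real.volume_Icc, ← ENNReal.ofReal_mul hε'pos.le]
      have h1 : ε' * (T - δ) ≤ e4.toReal := by
        rw [hε'def, div_mul_eq_mul_div, mul_div_assoc]
        refine mul_le_of_le_one_right ENNReal.toReal_nonneg ?_
        rw [div_le_one (by linarith)]; linarith
      calc ENNReal.ofReal (ε' * (T - δ)) ≤ ENNReal.ofReal e4.toReal :=
            ENNReal.ofReal_le_ofReal h1
        _ = e4 := ENNReal.ofReal_toReal he4ne
    -- uniform middle convergence via an ε-net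
    obtain ⟨N, hN⟩ : ∃ N, ∀ n ≥ N, ∀ t ∈ Icc δ T, ∀ x ∈ K₀,
        max ((∫⁻ y, p t x y ∂(μseq n)) - ∫⁻ y, p t x y ∂μ)
          ((∫⁻ y, p t x y ∂μ) - ∫⁻ y, p t x y ∂(μseq n)) ≤ ENNReal.ofReal ε' := by
      set L : Set (ℝ × S) := Icc δ T ×ˢ K₀ with hLdef
      have hL : IsCompact L := isCompact_Icc.prod hK₀
      set qR : ℝ × S × S → ℝ := fun q => (p q.1 q.2.1 q.2.2).toReal with hqRdef
      have hqRcont : ContinuousOn qR {q : ℝ × S × S | 0 < q.1} := fun q hq =>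
        (ENNReal.tendsto_toReal (hp_fin q.1 hq q.2.1 q.2.2)).comp (hp_cont q hq)
      set L' : Set (ℝ × S × S) := Icc δ T ×ˢ (K₀ ×ˢ K₀) with hL'def
      have hL' : IsCompact L' := isCompact_Icc.prod (hK₀.prod hK₀)
      have hL'sub : L' ⊆ {q : ℝ × S × S | 0 < q.1} := fun q hq =>
        lt_of_lt_of_le hδpos hq.1.1
      have huc := hL'.uniformContinuousOn_of_continuous (hqRcont.mono hL'sub)
      rw [Metric.uniformContinuousOn_iff] at huc
      set ε'' : ℝ := ε' / (2 * Mr + 2) with hε''def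
      have h2m : (0:ℝ) < 2 * Mr + 2 := by linarith
      have hε''pos : 0 < ε'' := div_pos hε'pos h2m
      obtain ⟨r, hrpos, hr⟩ := huc ε'' hε''pos
      obtain ⟨cs, hcsL, hcov⟩ := hL.elim_nhds_subcover (fun c => Metric.ball c r)
        (fun c _ => Metric.ball_mem_nhds c hrpos)
      -- integrability of the real kernel over supported measures
      have hqbd : ∀ (ν : Measure S) [IsFiniteMeasure ν], (∀ᵐ y ∂ν, y ∈ K₀) →
          ∀ t ∈ Icc δ T, ∀ x ∈ K₀, Integrable (fun y => qR (t, x, y)) ν := by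
        intro ν _ hae t ht x hx
        refine ⟨((hmslice t x).ennreal_toReal).aestronglyMeasurable, ?_⟩
        refine HasFiniteIntegral.of_bounded (C := C.toReal) ?_
        filter_upwards [hae] with y hy
        rw [hqRdef]
        simp only [Real.norm_eq_abs, abs_of_nonneg ENNReal.toReal_nonneg]
        exact ENNReal.toReal_mono hCne (hpC t ht.1 x hx y hy)
      -- real integrals equal toReal of lintegrals
      have hintR : ∀ (ν : Measure S), ∀ s : ℝ, 0 < s → ∀ z : S,
          (∫⁻ y, p s z y ∂ν).toReal = ∫ y, qR (s, z, y) ∂ν := by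
        intro ν s hs z
        rw [hqRdef]
        exact (integral_toReal ((hmslice s z).aemeasurable)
          (Filter.Eventually.of_forall fun y => lt_top_iff_ne_top.2 (hp_fin s hs z y))).symm
      -- convergence at the centers
      have hcenter : ∀ c ∈ cs, Tendsto (fun n => ∫ y, qR (c.1, c.2, y) ∂(μseq n)) atTop
          (𝓝 (∫ y, qR (c.1, c.2, y) ∂μ)) := by
        intro c hc
        have hcL : c ∈ L := hcsL c hc
        have hct : c.1 ∈ Icc δ T := hcL.1
        have hcx : c.2 ∈ K₀ := hcL.2
        have htpos : (0:ℝ) < c.1 := lt_of_lt_of_le hδpos hct.1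
        set k : ℝ := C.toReal + 1 with hkdef
        have hk0 : (0:ℝ) ≤ k := by
          rw [hkdef]; have := ENNReal.toReal_nonneg (a := C); linarith
        have hCk : C ≤ ENNReal.ofReal k := by
          rw [← ENNReal.ofReal_toReal hCne]
          exact ENNReal.ofReal_le_ofReal (by rw [hkdef]; linarith)
        have hmin : ∀ (ν : Measure S), (∀ᵐ y ∂ν, y ∈ K₀) →
            (∫⁻ y, min (p c.1 c.2 y) (ENNReal.ofReal k) ∂ν) = ∫⁻ y, p c.1 c.2 y ∂ν := by
          intro ν hae
          refine lintegral_congr_ae ?_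
          filter_upwards [hae] with y hy
          exact min_eq_left ((hpC c.1 hct.1 c.2 hcx y hy).trans hCk)
        have hconv := tendsto_lintegral_min p hp_cont hp_fin μ μseq hweak htpos c.2 hk0
        rw [hmin μ haeμ] at hconv
        have hconv2 : Tendsto (fun n => ∫⁻ y, p c.1 c.2 y ∂(μseq n)) atTop
            (𝓝 (∫⁻ y, p c.1 c.2 y ∂μ)) := hconv.congr fun n => hmin (μseq n) (haen n)
        have hne : (∫⁻ y, p c.1 c.2 y ∂μ) ≠ ⊤ :=
          ne_top_of_le_ne_top hCM (hFb μ hsupp hMμ c.1 hct.1 c.2 hcx)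
        have h3 := (ENNReal.tendsto_toReal hne).comp hconv2
        rw [hintR μ c.1 htpos c.2] at h3
        exact h3.congr fun n => hintR (μseq n) c.1 htpos c.2
      -- eventually all centers are ε''-close
      have hev : ∀ᶠ n in atTop, ∀ c ∈ cs,
          |(∫ y, qR (c.1, c.2, y) ∂(μseq n)) - ∫ y, qR (c.1, c.2, y) ∂μ| < ε'' := by
        rw [Filter.eventually_all_finset]
        intro c hc
        filter_upwards [(hcenter c hc) (Metric.ball_mem_nhds _ hε''pos)] with n hn
        simpa [Real.dist_eq] using hn
      obtain ⟨N, hNe⟩ := eventually_atTop.mp hev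
      refine ⟨N, fun n hn t ht x hx => ?_⟩
      have haK : ((t, x) : ℝ × S) ∈ L := ⟨ht, hx⟩
      obtain ⟨c, hc, hcball⟩ := mem_iUnion₂.mp (hcov haK)
      have hcL : c ∈ L := hcsL c hc
      have hdxc : dist ((t, x) : ℝ × S) c < r := Metric.mem_ball.mp hcball
      -- nearness within each measure
      have hnear : ∀ (ν : Measure S) [IsFiniteMeasure ν], (∀ᵐ y ∂ν, y ∈ K₀) →
          (ν univ).toReal ≤ Mr →
          |(∫ y, qR (t, x, y) ∂ν) - ∫ y, qR (c.1, c.2, y) ∂ν| ≤ ε'' * Mr := by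
        intro ν _ hae hmν
        rw [← integral_sub (hqbd ν hae t ht x hx) (hqbd ν hae c.1 hcL.1 c.2 hcL.2)]
        have hb : ‖∫ y, (qR (t, x, y) - qR (c.1, c.2, y)) ∂ν‖ ≤ ε'' * (ν univ).toReal := by
          refine norm_integral_le_of_norm_le_const ?_
          filter_upwards [hae] with y hy
          have h1 : ((t, x, y) : ℝ × S × S) ∈ L' := ⟨ht, hx, hy⟩
          have h2 : ((c.1, c.2, y) : ℝ × S × S) ∈ L' := ⟨hcL.1, hcL.2, hy⟩
          have hdist : dist ((t, x, y) : ℝ × S × S) ((c.1, c.2, y) : ℝ × S × S) < r := by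
            have he : dist ((t, x, y) : ℝ × S × S) ((c.1, c.2, y) : ℝ × S × S)
                = dist ((t, x) : ℝ × S) c := by
              rw [Prod.dist_eq, Prod.dist_eq, Prod.dist_eq, dist_self]
              rw [max_eq_left dist_nonneg]
            rw [he]; exact hdxc
          have := hr _ h1 _ h2 hdist
          rw [Real.dist_eq] at this
          rw [Real.norm_eq_abs]
          exact this.le
        rw [Real.norm_eq_abs] at hb
        calc |∫ y, (qR (t, x, y) - qR (c.1, c.2, y)) ∂ν| ≤ ε'' * (ν univ).toReal := hb
          _ ≤ ε'' * Mr := by gcongr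
      -- assemble the real estimate
      have hane : (∫⁻ y, p t x y ∂(μseq n)) ≠ ⊤ :=
        ne_top_of_le_ne_top hCM (hFb (μseq n) (hsuppn n) (hMn n) t ht.1 x hx)
      have hbne : (∫⁻ y, p t x y ∂μ) ≠ ⊤ :=
        ne_top_of_le_ne_top hCM (hFb μ hsupp hMμ t ht.1 x hx)
      have htpos : (0:ℝ) < t := lt_of_lt_of_le hδpos ht.1
      have habs : |(∫⁻ y, p t x y ∂(μseq n)).toReal - (∫⁻ y, p t x y ∂μ).toReal| ≤ ε' := by
        rw [hintR (μseq n) t htpos x, hintR μ t htpos x]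
        have t1 := hnear (μseq n) (haen n) (hMrn n)
        have t2 := hnear μ haeμ hMrμ
        have t3 := (hNe n hn c hc).le
        have e1 : ε'' * (2 * Mr + 2) = ε' := div_mul_cancel₀ _ h2m.ne'
        calc |(∫ y, qR (t, x, y) ∂(μseq n)) - ∫ y, qR (t, x, y) ∂μ|
            ≤ |(∫ y, qR (t, x, y) ∂(μseq n)) - ∫ y, qR (c.1, c.2, y) ∂(μseq n)|
              + |(∫ y, qR (c.1, c.2, y) ∂(μseq n)) - ∫ y, qR (t, x, y) ∂μ| := abs_sub_le _ _ _
          _ ≤ |(∫ y, qR (t, x, y) ∂(μseq n)) - ∫ y, qR (c.1, c.2, y) ∂(μseq n)|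
              + (|(∫ y, qR (c.1, c.2, y) ∂(μseq n)) - ∫ y, qR (c.1, c.2, y) ∂μ|
                + |(∫ y, qR (c.1, c.2, y) ∂μ) - ∫ y, qR (t, x, y) ∂μ|) := by
              gcongr; exact abs_sub_le _ _ _
          _ ≤ ε'' * Mr + (ε'' + ε'' * Mr) := by
              have t2' : |(∫ y, qR (c.1, c.2, y) ∂μ) - ∫ y, qR (t, x, y) ∂μ| ≤ ε'' * Mr := by
                rw [abs_sub_comm]; exact t2
              gcongr
          _ ≤ ε' := by nlinarith [hε''pos.le]
      refine max_le ?_ ?_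
      · exact (tsub_le_ofReal_abs hane hbne).trans (ENNReal.ofReal_le_ofReal habs)
      · have h := tsub_le_ofReal_abs hbne hane
        rw [abs_sub_comm] at h
        exact h.trans (ENNReal.ofReal_le_ofReal habs)
    -- decomposition of the potential
    have hdec : ∀ (ν : Measure S) [IsFiniteMeasure ν], ∀ x : S,
        potential p 1 ν x = (∫⁻ t in Ioo 0 δ, w t * ∫⁻ y, p t x y ∂ν)
          + (∫⁻ t in Icc δ T, w t * ∫⁻ y, p t x y ∂ν)
          + (∫⁻ t in Ioi T, w t * ∫⁻ y, p t x y ∂ν) := by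
      intro ν _ x
      rw [potential_repr p hp_meas x ν]
      have h1 : Ioi (0:ℝ) = Ioc 0 T ∪ Ioi T := (Ioc_union_Ioi_eq_Ioi (hδpos.le.trans hδT)).symm
      have h2 : Ioc (0:ℝ) T = Ioo 0 δ ∪ Icc δ T := (Ioo_union_Icc_eq_Ioc hδpos hδT).symm
      have hd1 : Disjoint (Ioc (0:ℝ) T) (Ioi T) := by
        rw [Set.disjoint_left]; intro a ha ha'; exact absurd ha.2 (not_le.2 ha')
      have hd2 : Disjoint (Ioo (0:ℝ) δ) (Icc δ T) := by
        rw [Set.disjoint_left]; intro a ha ha'; exact absurd ha'.1 (not_le.2 ha.2)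
      rw [h1, lintegral_union measurableSet_Ioi hd1, h2, lintegral_union measurableSet_Icc hd2]
    -- short-time bounds
    have hshortb : ∀ n, ∀ x ∈ K₀,
        (∫⁻ t in Ioo 0 δ, ∫⁻ y, p t x y ∂(μseq n)) ≤ e4 := by
      intro n x hx
      refine le_trans ?_ hAδ
      exact le_trans
        (le_biSup (fun x => ∫⁻ s in Ioo (0:ℝ) δ, ∫⁻ y, p s x y ∂(μseq n)) hx)
        (le_iSup (fun n => ⨆ x ∈ K₀, ∫⁻ s in Ioo (0:ℝ) δ, ∫⁻ y, p s x y ∂(μseq n)) n)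
    have hwF : ∀ (ν : Measure S) [SFinite ν], ∀ x : S, ∀ s : Set ℝ, s ⊆ Ioi 0 →
        MeasurableSet s →
        (∫⁻ t in s, w t * ∫⁻ y, p t x y ∂ν) ≤ ∫⁻ t in s, ∫⁻ y, p t x y ∂ν := by
      intro ν _ x s hs hms
      refine setLIntegral_mono (meas_F p hp_meas x ν) fun t ht => ?_
      calc w t * (∫⁻ y, p t x y ∂ν) ≤ 1 * ∫⁻ y, p t x y ∂ν :=
            mul_le_mul' (hw1 t (le_of_lt (hs ht))) le_rfl
        _ = _ := one_mul _
    have hI0n : ∀ n, ∀ x ∈ K₀, (∫⁻ t in Ioo 0 δ, w t * ∫⁻ y, p t x y ∂(μseq n)) ≤ e4 :=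
      fun n x hx => le_trans
        (hwF (μseq n) x (Ioo 0 δ) Ioo_subset_Ioi_self measurableSet_Ioo) (hshortb n x hx)
    -- Fatou / portmanteau for the limit measure
    have hliminf : ∀ t : ℝ, 0 < t → ∀ x : S,
        (∫⁻ y, p t x y ∂μ) ≤ liminf (fun n => ∫⁻ y, p t x y ∂(μseq n)) atTop := by
      intro t ht x
      rw [lintegral_eq_iSup_min μ _ (hmslice t x) (fun y => hp_fin t ht x y)]
      refine iSup_le fun k => ?_
      have hconv := tendsto_lintegral_min p hp_cont hp_fin μ μseq hweak ht x
        (k := (k:ℝ)) (Nat.cast_nonneg k)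
      rw [← hconv.liminf_eq]
      exact liminf_le_liminf (Filter.Eventually.of_forall fun n =>
        lintegral_mono fun y => min_le_left _ _)
    have hI0μ : ∀ x ∈ K₀, (∫⁻ t in Ioo 0 δ, w t * ∫⁻ y, p t x y ∂μ) ≤ e4 := by
      intro x hx
      refine le_trans (hwF μ x (Ioo 0 δ) Ioo_subset_Ioi_self measurableSet_Ioo) ?_
      calc (∫⁻ t in Ioo 0 δ, ∫⁻ y, p t x y ∂μ)
          ≤ ∫⁻ t in Ioo 0 δ, liminf (fun n => ∫⁻ y, p t x y ∂(μseq n)) atTop :=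
            setLIntegral_mono (Measurable.liminf fun n => meas_F p hp_meas x (μseq n))
              (fun t ht => hliminf t ht.1 x)
        _ ≤ liminf (fun n => ∫⁻ t in Ioo 0 δ, ∫⁻ y, p t x y ∂(μseq n)) atTop :=
            lintegral_liminf_le fun n => meas_F p hp_meas x (μseq n)
        _ ≤ liminf (fun _ : ℕ => e4) atTop :=
            liminf_le_liminf (Filter.Eventually.of_forall fun n => hshortb n x hx)
        _ = e4 := liminf_const e4
    -- tail bound
    have hwint : (∫⁻ t in Ioi T, w t) = ENNReal.ofReal (Real.exp (-T)) := by
      rw [hwdef]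
      rw [← ofReal_integral_eq_lintegral_ofReal (exp_neg_integrableOn_Ioi T one_pos)
        (Filter.Eventually.of_forall fun t => (Real.exp_pos _).le)]
      congr 1
      rw [show (fun t : ℝ => Real.exp (-1 * t)) = fun t : ℝ => Real.exp (-t) by
        funext t; rw [neg_one_mul]]
      exact integral_exp_neg_Ioi T
    have hI2 : ∀ (ν : Measure S) [IsFiniteMeasure ν], ν K₀ᶜ = 0 → ν univ ≤ M → ∀ x ∈ K₀,
        (∫⁻ t in Ioi T, w t * ∫⁻ y, p t x y ∂ν) ≤ e4 := by
      intro ν _ hν hνM x hx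
      calc (∫⁻ t in Ioi T, w t * ∫⁻ y, p t x y ∂ν)
          ≤ ∫⁻ t in Ioi T, w t * (C * M) := by
            refine setLIntegral_mono (hwmeas.mul measurable_const) fun t ht => ?_
            exact mul_le_mul' le_rfl (hFb ν hν hνM t (hδT.trans (le_of_lt ht)) x hx)
        _ = (∫⁻ t in Ioi T, w t) * (C * M) := by rw [lintegral_mul_const _ hwmeas]
        _ = ENNReal.ofReal (Real.exp (-T)) * (C * M) := by rw [hwint]
        _ ≤ e4 := hTe
    -- middle bound
    have hI1 : ∀ (νa νb : Measure S) [IsFiniteMeasure νa] [IsFiniteMeasure νb], ∀ x : S,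
        (∀ t ∈ Icc δ T, (∫⁻ y, p t x y ∂νa) - (∫⁻ y, p t x y ∂νb) ≤ ENNReal.ofReal ε') →
        (∫⁻ t in Icc δ T, w t * ∫⁻ y, p t x y ∂νa)
          - (∫⁻ t in Icc δ T, w t * ∫⁻ y, p t x y ∂νb) ≤ e4 := by
      intro νa νb _ _ x hdiff
      rw [tsub_le_iff_right]
      calc (∫⁻ t in Icc δ T, w t * ∫⁻ y, p t x y ∂νa)
          ≤ ∫⁻ t in Icc δ T, (ENNReal.ofReal ε' + w t * ∫⁻ y, p t x y ∂νb) := by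
            refine setLIntegral_mono
              (measurable_const.add (hwmeas.mul (meas_F p hp_meas x νb))) fun t ht => ?_
            have h1 : (∫⁻ y, p t x y ∂νa) ≤ ENNReal.ofReal ε' + ∫⁻ y, p t x y ∂νb :=
              tsub_le_iff_right.mp (hdiff t ht)
            calc w t * (∫⁻ y, p t x y ∂νa)
                ≤ w t * (ENNReal.ofReal ε' + ∫⁻ y, p t x y ∂νb) := mul_le_mul' le_rfl h1
              _ = w t * ENNReal.ofReal ε' + w t * ∫⁻ y, p t x y ∂νb := mul_add _ _ _
              _ ≤ 1 * ENNReal.ofReal ε' + w t * ∫⁻ y, p t x y ∂νb := by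
                  gcongr
                  exact hw1 t (hδpos.le.trans ht.1)
              _ = ENNReal.ofReal ε' + w t * ∫⁻ y, p t x y ∂νb := by rw [one_mul]
        _ = ENNReal.ofReal ε' * volume (Icc δ T)
            + ∫⁻ t in Icc δ T, w t * ∫⁻ y, p t x y ∂νb := by
            rw [lintegral_add_left measurable_const, setLIntegral_const]
        _ ≤ e4 + ∫⁻ t in Icc δ T, w t * ∫⁻ y, p t x y ∂νb := by gcongr
    -- conclusion for n ≥ N
    refine ⟨N, fun n hn => ?_⟩
    refine le_trans (iSup₂_le fun x hx => ?_) hε₀le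
    rw [hdec (μseq n) x, hdec μ x]
    have hmidn : ∀ t ∈ Icc δ T,
        (∫⁻ y, p t x y ∂(μseq n)) - (∫⁻ y, p t x y ∂μ) ≤ ENNReal.ofReal ε' :=
      fun t ht => (le_max_left _ _).trans (hN n hn t ht x hx)
    have hmidμ : ∀ t ∈ Icc δ T,
        (∫⁻ y, p t x y ∂μ) - (∫⁻ y, p t x y ∂(μseq n)) ≤ ENNReal.ofReal ε' :=
      fun t ht => (le_max_right _ _).trans (hN n hn t ht x hx)
    refine max_le ?_ ?_
    · refine le_trans tsub3 (le_trans ?_ he4sum)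
      gcongr
      · exact hI0n n x hx
      · exact hI1 (μseq n) μ x hmidn
      · exact hI2 (μseq n) (hsuppn n) (hMn n) x hx
    · refine le_trans tsub3 (le_trans ?_ he4sum)
      gcongr
      · exact hI0μ x hx
      · exact hI1 μ (μseq n) x hmidμ
      · exact hI2 μ hsupp hMμ x hx
  -- essSup part
  refine ⟨main, ?_⟩
  have hess : ∀ n, essSup
      (fun x => max (potential p 1 (μseq n) x - potential p 1 μ x)
        (potential p 1 μ x - potential p 1 (μseq n) x)) (μseq n + μ)
      ≤ ⨆ x ∈ K₀, max (potential p 1 (μseq n) x - potential p 1 μ x)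
        (potential p 1 μ x - potential p 1 (μseq n) x) := by
    intro n
    refine essSup_le_of_ae_le _ ?_
    have h0 : (μseq n + μ) K₀ᶜ = 0 := by
      rw [Measure.add_apply, hsuppn n, hsupp, add_zero]
    have hae : ∀ᵐ x ∂(μseq n + μ), x ∈ K₀ := by rw [ae_iff]; exact h0
    filter_upwards [hae] with x hx
    exact le_biSup (fun x => max (potential p 1 (μseq n) x - potential p 1 μ x)
      (potential p 1 μ x - potential p 1 (μseq n) x)) hx
  exact tendsto_of_tendsto_of_tendsto_of_le_of_le tendsto_const_nhds main
    (fun n => zero_le) hess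
end
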